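/- arXiv:2604.24650 — 9 statements merged into one kernel-verified Lean document; each statement's English description precedes it below -/
import Mathlib

section
/- Let k ≥ 3 and 1 < a < b < c be integers with a^k < b < c, and let r, s, t be positive integers with a^k·b + 1 = r^k, a^k·c + 1 = s^k, and b·c + 1 = t^k. Then r·s > a^2·t; in particular z := r·s − a^2·t is a positive integer. -/
/-- For a `k`-th power Diophantine triple `{a^k, b, c}` witnessed by `r, s, t`,
one has `r·s > a²·t`, so `z := r·s - a²·t` is a positive integer. -/
theorem rs_gt_a_sq_t
    (k : ℕ) (a b c r s t : ℤ) (hk : 3 ≤ k)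
    (ha : 1 < a) (hab : a < b) (hbc : b < c) (hakb : a ^ k < b)
    (hr : 0 < r) (hs : 0 < s) (ht : 0 < t)
    (h1 : a ^ k * b + 1 = r ^ k) (h2 : a ^ k * c + 1 = s ^ k)
    (h3 : b * c + 1 = t ^ k) :
    r * s > a ^ 2 * t := by
  have ha0 : (0:ℤ) < a := by linarith
  have hak : (0:ℤ) < a ^ k := pow_pos ha0 k
  have hb0 : (0:ℤ) < b := by linarith
  have hc0 : (0:ℤ) < c := by linarith
  have key : (a ^ 2 * t) ^ k < (r * s) ^ k := by
    have e1 : (a ^ 2 * t) ^ k = (a ^ k) ^ 2 * t ^ k := by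
      rw [mul_pow, ← pow_mul, mul_comm 2 k, pow_mul]
    calc (a ^ 2 * t) ^ k = (a ^ k) ^ 2 * (b * c + 1) := by rw [e1, h3]
      _ < (a ^ k * b + 1) * (a ^ k * c + 1) := by
          nlinarith [mul_lt_mul_of_pos_left hakb hak, mul_pos hak hc0]
      _ = (r * s) ^ k := by rw [h1, h2, mul_pow]
  by_contra h
  push_neg at h
  have h1' : (r * s) ^ k ≤ (a ^ 2 * t) ^ k :=
    pow_le_pow_left₀ (by positivity) h k
  linarith
end

section
/- Let k ≥ 3 be either 4 or a prime, and let 1 < a < b < c be integers with a^k < b < c such that a^k·b + 1 = r^k, a^k·c + 1 = s^k, and b·c + 1 = t^k for positive integers r, s, t. Then a^k·b < (a^{2k}·(b·c + 1))^{(k−2)/k}, where the right-hand side is a real power. -/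
lemma bin_aux (X : ℤ) (hX : 0 ≤ X) : ∀ m : ℕ, X^(m+1) + ((m:ℤ)+1) * X^m ≤ (X+1)^(m+1) := by
  intro m
  induction m with
  | zero => simp
  | succ n ih =>
    have h1 : (X^(n+1) + ((n:ℤ)+1) * X^n) * (X+1) ≤ (X+1)^(n+1) * (X+1) :=
      mul_le_mul_of_nonneg_right ih (by linarith)
    have hn : (0:ℤ) ≤ ((n:ℤ)+1) * X^n := by positivity
    have expand : (X^(n+1) + ((n:ℤ)+1) * X^n) * (X+1)
        = X^(n+1+1) + ((n:ℤ)+1+1) * X^(n+1) + ((n:ℤ)+1) * X^n := by ring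
    push_cast
    calc X^(n+1+1) + ((n:ℤ)+1+1) * X^(n+1)
        ≤ (X^(n+1) + ((n:ℤ)+1) * X^n) * (X+1) := by rw [expand]; linarith
      _ ≤ (X+1)^(n+1) * (X+1) := h1
      _ = (X+1)^(n+1+1) := by ring

lemma core (m : ℕ) (a b c r s t : ℤ)
    (ha : 1 < a) (hab : a < b) (hbc : b < c) (hakb : a ^ (m+3) < b)
    (hr : 0 < r) (hs : 0 < s) (ht : 0 < t)
    (h1 : a ^ (m+3) * b + 1 = r ^ (m+3)) (h2 : a ^ (m+3) * c + 1 = s ^ (m+3))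
    (h3 : b * c + 1 = t ^ (m+3)) :
    (a ^ (m+3) * b) ^ (m+3) < (a ^ (2*(m+3)) * (b*c+1)) ^ (m+1) := by
  have ha0 : (0:ℤ) < a := by linarith
  have hb1 : 1 < b := by linarith
  have hc1 : 1 < c := by linarith
  have hA1 : 1 < a ^ (m+3) := one_lt_pow₀ ha (by omega)
  have hakc : a ^ (m+3) < c := hakb.trans hbc
  have hApos : (0:ℤ) < a ^ (m+3) := by positivity
  obtain ⟨K, hK2, hKcast⟩ : ∃ K : ℤ, 2 ≤ K ∧ K = (m:ℤ)+3 := ⟨(m:ℤ)+3, by have := Nat.cast_nonneg (α := ℤ) m; linarith, rfl⟩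
  -- key identity
  have key : (r*s)^(m+3) = a^(2*(m+3)) * t^(m+3) + (a^(m+3)*(b+c) + 1 - a^(2*(m+3))) := by
    have e1 : (r*s)^(m+3) = (a^(m+3)*b+1) * (a^(m+3)*c+1) := by rw [mul_pow, ← h1, ← h2]
    rw [e1, ← h3]; ring
  have hAA : a^(2*(m+3)) = a^(m+3) * a^(m+3) := by ring
  have hAb : a^(m+3) * a^(m+3) < a^(m+3) * b := mul_lt_mul_of_pos_left hakb hApos
  have hAc : a^(m+3) * a^(m+3) < a^(m+3) * c := mul_lt_mul_of_pos_left hakc hApos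
  have hAbc : a^(m+3) * b < a^(m+3) * c := mul_lt_mul_of_pos_left hbc hApos
  have hAcpos : 0 < a^(m+3) * c := by positivity
  have hE : 0 < a^(m+3)*(b+c) + 1 - a^(2*(m+3)) := by
    have e : a^(m+3)*(b+c) = a^(m+3)*b + a^(m+3)*c := by ring
    rw [e, hAA]; linarith
  have hE2 : a^(m+3)*(b+c) + 1 - a^(2*(m+3)) < 2 * (a^(m+3) * c) := by
    have e : a^(m+3)*(b+c) = a^(m+3)*b + a^(m+3)*c := by ring
    have h1' : (1:ℤ) < a^(m+3) * a^(m+3) := by nlinarith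
    rw [e, hAA]; linarith
  -- rs > a^2 t
  have h4 : (a^2*t)^(m+3) < (r*s)^(m+3) := by
    have e : (a^2*t)^(m+3) = a^(2*(m+3)) * t^(m+3) := by ring
    rw [e, key]; linarith
  have hrs : a^2*t + 1 ≤ r*s := by
    have := lt_of_pow_lt_pow_left₀ (m+3) (by positivity : (0:ℤ) ≤ r*s) h4
    omega
  -- binomial lower bound
  have hbin : (a^2*t)^(m+3) + K * (a^2*t)^(m+2) ≤ (a^2*t+1)^(m+3) := by
    have := bin_aux (a^2*t) (by positivity) (m+2)
    rw [hKcast]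
    push_cast at this ⊢
    linarith
  have h5 : (a^2*t+1)^(m+3) ≤ (r*s)^(m+3) :=
    pow_le_pow_left₀ (by positivity) hrs (m+3)
  have h6 : K * (a^2*t)^(m+2) < 2 * (a^(m+3) * c) := by
    have e : (a^2*t)^(m+3) = a^(2*(m+3)) * t^(m+3) := by ring
    rw [e] at hbin
    linarith
  -- cancel a^(m+3)
  have h7 : K * (a^(m+1) * t^(m+2)) < 2 * c := by
    have e : K * (a^2*t)^(m+2) = (K * (a^(m+1)*t^(m+2))) * a^(m+3) := by ring
    rw [e] at h6
    have e2 : 2 * (a^(m+3) * c) = (2*c) * a^(m+3) := by ring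
    rw [e2] at h6
    exact lt_of_mul_lt_mul_right h6 hApos.le
  -- raise to the (m+3)-th power
  have hKpos : (0:ℤ) < K := by linarith
  have hLpos : (0:ℤ) ≤ K * (a^(m+1) * t^(m+2)) := by positivity
  have h8 : (K * (a^(m+1) * t^(m+2)))^(m+3) < (2*c)^(m+3) :=
    pow_lt_pow_left₀ h7 hLpos (by omega)
  have h9 : K^(m+3) * (a^((m+1)*(m+3)) * (b*c+1)^(m+2)) < 2^(m+3) * c^(m+3) := by
    have e : (K * (a^(m+1) * t^(m+2)))^(m+3)
        = K^(m+3) * (a^((m+1)*(m+3)) * (t^(m+3))^(m+2)) := by ring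
    rw [e, ← h3] at h8
    have e2 : (2*c:ℤ)^(m+3) = 2^(m+3) * c^(m+3) := by ring
    rw [e2] at h8
    exact h8
  -- K^k ≥ 2^k
  have hkk : (2:ℤ)^(m+3) ≤ K^(m+3) := pow_le_pow_left₀ (by norm_num) hK2 _
  have hPpos : (0:ℤ) ≤ a^((m+1)*(m+3)) * (b*c+1)^(m+2) := by positivity
  have h10 : a^((m+1)*(m+3)) * (b*c+1)^(m+2) < c^(m+3) := by
    have h2p : (0:ℤ) < 2^(m+3) := by positivity
    have hmono := mul_le_mul_of_nonneg_right hkk hPpos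
    have : (2:ℤ)^(m+3) * (a^((m+1)*(m+3)) * (b*c+1)^(m+2)) < 2^(m+3) * c^(m+3) := by
      calc (2:ℤ)^(m+3) * (a^((m+1)*(m+3)) * (b*c+1)^(m+2))
          ≤ K^(m+3) * (a^((m+1)*(m+3)) * (b*c+1)^(m+2)) := hmono
        _ < 2^(m+3) * c^(m+3) := h9
    exact lt_of_mul_lt_mul_left this h2p.le
  -- (bc+1)^(m+2) > (bc)^(m+2)
  have h11 : a^((m+1)*(m+3)) * (b^(m+2) * c^(m+2)) < c^(m+3) := by
    have hlt : (b*c)^(m+2) ≤ (b*c+1)^(m+2) :=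
      pow_le_pow_left₀ (by positivity) (by linarith) _
    have e : (b*c)^(m+2) = b^(m+2)*c^(m+2) := by ring
    have hapos : (0:ℤ) ≤ a^((m+1)*(m+3)) := by positivity
    calc a^((m+1)*(m+3)) * (b^(m+2) * c^(m+2))
        = a^((m+1)*(m+3)) * (b*c)^(m+2) := by rw [e]
      _ ≤ a^((m+1)*(m+3)) * (b*c+1)^(m+2) := mul_le_mul_of_nonneg_left hlt hapos
      _ < c^(m+3) := h10
  -- cancel c^(m+2)
  have hgap : a^((m+1)*(m+3)) * b^(m+2) < c := by
    have hcp : (0:ℤ) < c^(m+2) := by positivity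
    have e : a^((m+1)*(m+3)) * (b^(m+2) * c^(m+2)) = (a^((m+1)*(m+3)) * b^(m+2)) * c^(m+2) := by ring
    have e2 : c^(m+3) = c * c^(m+2) := by ring
    rw [e, e2] at h11
    exact lt_of_mul_lt_mul_right h11 hcp.le
  -- final chain
  have hD : (0:ℤ) < a^((m+1)*(m+3)) * b^(m+2) := by positivity
  have hcpow : (a^((m+1)*(m+3)) * b^(m+2))^(m+1) < c^(m+1) :=
    pow_lt_pow_left₀ hgap hD.le (by omega)
  have lhs_le : (a ^ (m+3) * b) ^ (m+3) ≤ (a^(2*(m+3)))^(m+1) * b^(m+1) * (a^((m+1)*(m+3)) * b^(m+2))^(m+1) := by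
    have e1 : (a ^ (m+3) * b) ^ (m+3) = a^((m+3)*(m+3)) * b^(m+3) := by ring
    have e2 : (a^(2*(m+3)))^(m+1) * b^(m+1) * (a^((m+1)*(m+3)) * b^(m+2))^(m+1)
        = a^((m+1)*(m+3)*(m+3)) * b^((m+1)*(m+3)) := by ring
    rw [e1, e2]
    have hexp1 : (m+3)*(m+3) ≤ (m+1)*(m+3)*(m+3) :=
      Nat.mul_le_mul_right _ (Nat.le_mul_of_pos_left _ (by omega))
    have hexp2 : (m+3) ≤ (m+1)*(m+3) := Nat.le_mul_of_pos_left _ (by omega)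
    have hae : a^((m+3)*(m+3)) ≤ a^((m+1)*(m+3)*(m+3)) := pow_le_pow_right₀ ha.le hexp1
    have hbe : b^(m+3) ≤ b^((m+1)*(m+3)) := pow_le_pow_right₀ hb1.le hexp2
    exact mul_le_mul hae hbe (by positivity) (by positivity)
  have mid_lt : (a^(2*(m+3)))^(m+1) * b^(m+1) * (a^((m+1)*(m+3)) * b^(m+2))^(m+1)
      < (a ^ (2*(m+3)) * (b*c+1)) ^ (m+1) := by
    have hpos : (0:ℤ) < (a^(2*(m+3)))^(m+1) * b^(m+1) := by positivity
    have step1 : (a^(2*(m+3)))^(m+1) * b^(m+1) * (a^((m+1)*(m+3)) * b^(m+2))^(m+1)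
        < (a^(2*(m+3)))^(m+1) * b^(m+1) * c^(m+1) := (mul_lt_mul_iff_right₀ hpos).mpr hcpow
    have e : (a^(2*(m+3)))^(m+1) * b^(m+1) * c^(m+1) = (a^(2*(m+3)) * (b*c))^(m+1) := by ring
    have step2 : (a^(2*(m+3)) * (b*c))^(m+1) ≤ (a^(2*(m+3)) * (b*c+1))^(m+1) := by
      apply pow_le_pow_left₀ (by positivity)
      have : (0:ℤ) ≤ a^(2*(m+3)) := by positivity
      exact mul_le_mul_of_nonneg_left (by linarith) this
    calc (a^(2*(m+3)))^(m+1) * b^(m+1) * (a^((m+1)*(m+3)) * b^(m+2))^(m+1)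
        < (a^(2*(m+3)))^(m+1) * b^(m+1) * c^(m+1) := step1
      _ = (a^(2*(m+3)) * (b*c))^(m+1) := e
      _ ≤ _ := step2
  exact lt_of_le_of_lt lhs_le mid_lt

/-- For `k = 4` or `k` prime, and a `k`-th power Diophantine triple `{a^k, b, c}`,
one has `a^k b < (a^{2k}(bc+1))^{(k-2)/k}`. -/
theorem akb_lt_rpow_bound
    (k : ℕ) (a b c r s t : ℤ) (hk : 3 ≤ k) (hk4 : k = 4 ∨ Nat.Prime k)
    (ha : 1 < a) (hab : a < b) (hbc : b < c) (hakb : a ^ k < b)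
    (hr : 0 < r) (hs : 0 < s) (ht : 0 < t)
    (h1 : a ^ k * b + 1 = r ^ k) (h2 : a ^ k * c + 1 = s ^ k)
    (h3 : b * c + 1 = t ^ k) :
    ((a : ℝ) ^ k * b) < ((a : ℝ) ^ (2 * k) * (b * c + 1)) ^ (((k : ℝ) - 2) / k) := by
  obtain ⟨m, rfl⟩ : ∃ m, k = m + 3 := ⟨k - 3, by omega⟩
  have hcore := core m a b c r s t ha hab hbc hakb hr hs ht h1 h2 h3
  have ha0 : (0:ℤ) < a := by linarith
  have hb1 : (1:ℝ) < (b:ℝ) := by exact_mod_cast lt_of_lt_of_le ha hab.le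
  have hc1 : (1:ℝ) < (c:ℝ) := by
    have : (1:ℤ) < c := by linarith
    exact_mod_cast this
  set Y : ℝ := (a:ℝ) ^ (2 * (m+3)) * ((b:ℝ) * c + 1) with hYdef
  have hY : (0:ℝ) < Y := by
    have ha1 : (1:ℝ) < (a:ℝ) := by exact_mod_cast ha
    rw [hYdef]; positivity
  set e : ℝ := (((m+3:ℕ) : ℝ) - 2) / ((m+3:ℕ) : ℝ) with he
  have hYe : (Y ^ e) ^ (m+3) = Y ^ (m+1) := by
    rw [← Real.rpow_natCast (Y ^ e) (m+3), ← Real.rpow_mul hY.le,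
        ← Real.rpow_natCast Y (m+1)]
    congr 1
    rw [he]
    have hne : ((m+3:ℕ):ℝ) ≠ 0 := by positivity
    field_simp
    push_cast
    ring
  apply lt_of_pow_lt_pow_left₀ (m+3) (Real.rpow_nonneg hY.le e)
  rw [hYe]
  calc ((a:ℝ) ^ (m+3) * b) ^ (m+3) = (((a ^ (m+3) * b) ^ (m+3) : ℤ) : ℝ) := by push_cast; ring
    _ < (((a ^ (2*(m+3)) * (b*c+1)) ^ (m+1) : ℤ) : ℝ) := by exact_mod_cast hcore
    _ = Y ^ (m+1) := by rw [hYdef]; push_cast; ring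
end

section
/- Let k ≥ 3 be either 4 or a prime, and let 1 < a < b < c be integers with a^k < b < c such that a^k·b + 1 = r^k, a^k·c + 1 = s^k, and b·c + 1 = t^k for positive integers r, s, t, and set z := r·s − a^2·t (a positive integer). Then a^k·c > k·(a^{2k}·(b·c + 1))^{(k−1)/k}·z, where the real power is taken on positive reals. -/
set_option maxHeartbeats 1000000

private lemma binom_lb' (m : ℕ) (y z : ℤ) (hy : 0 ≤ y) (hz : 0 ≤ z) :
    2*y^(m+3) + 2*((m:ℤ)+3)*y^(m+2)*z + ((m:ℤ)+3)*((m:ℤ)+2)*y^(m+1)*z^2 + 2*z^(m+3)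
      ≤ 2*(y+z)^(m+3) := by
  induction m with
  | zero => exact le_of_eq (by push_cast; ring)
  | succ n ih =>
    have hyz : (0:ℤ) ≤ y + z := by linarith
    have h1 : (y+z) * (2*y^(n+3) + 2*((n:ℤ)+3)*y^(n+2)*z + ((n:ℤ)+3)*((n:ℤ)+2)*y^(n+1)*z^2 + 2*z^(n+3))
        ≤ (y+z) * (2*(y+z)^(n+3)) := mul_le_mul_of_nonneg_left ih hyz
    have key : (y+z) * (2*y^(n+3) + 2*((n:ℤ)+3)*y^(n+2)*z + ((n:ℤ)+3)*((n:ℤ)+2)*y^(n+1)*z^2 + 2*z^(n+3))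
        = (2*y^(n+1+3) + 2*((n:ℤ)+1+3)*y^(n+1+2)*z + ((n:ℤ)+1+3)*((n:ℤ)+1+2)*y^(n+1+1)*z^2 + 2*z^(n+1+3))
          + 2*y*z^(n+3) + ((n:ℤ)+3)*((n:ℤ)+2)*y^(n+1)*z^3 := by ring
    have h2 : (y+z) * (2*(y+z)^(n+3)) = 2*(y+z)^(n+1+3) := by ring
    have hterm1 : 0 ≤ 2*y*z^(n+3) := by positivity
    have hterm2 : 0 ≤ ((n:ℤ)+3)*((n:ℤ)+2)*y^(n+1)*z^3 := by positivity
    push_cast at *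
    linarith [h1, key.ge, hterm1, hterm2]

private lemma pow_sub_pow_ub' (n : ℕ) (y z : ℤ) (hy : 0 ≤ y) (hz : 0 ≤ z) :
    (y+z)^(n+1) - y^(n+1) ≤ ((n:ℤ)+1) * (y+z)^n * z := by
  induction n with
  | zero => simp
  | succ n ih =>
    have hyz : (0:ℤ) ≤ y + z := by linarith
    have hyx : y^(n+1) ≤ (y+z)^(n+1) := pow_le_pow_left₀ hy (by linarith) _
    have h1 : (y+z) * ((y+z)^(n+1) - y^(n+1)) ≤ (y+z) * (((n:ℤ)+1) * (y+z)^n * z) :=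
      mul_le_mul_of_nonneg_left ih hyz
    have key : (y+z) * ((y+z)^(n+1) - y^(n+1)) = (y+z)^(n+1+1) - y^(n+1+1) - z*y^(n+1) := by ring
    have h2 : (y+z) * (((n:ℤ)+1) * (y+z)^n * z) = ((n:ℤ)+1) * (y+z)^(n+1) * z := by ring
    have h3 : z*y^(n+1) ≤ z*(y+z)^(n+1) := mul_le_mul_of_nonneg_left hyx hz
    push_cast at *
    linarith [h1, key, h2, h3]

/-- The core integer inequality. -/
private lemma core_int (m : ℕ) (a b c r s t z : ℤ)
    (ha : 1 < a) (hab : a < b) (hbc : b < c) (hakb : a ^ (m+3) < b)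
    (hr : 0 < r) (hs : 0 < s) (ht : 0 < t)
    (h1 : a ^ (m+3) * b + 1 = r ^ (m+3)) (h2 : a ^ (m+3) * c + 1 = s ^ (m+3))
    (h3 : b * c + 1 = t ^ (m+3)) (hz : z = r * s - a ^ 2 * t) :
    ((m:ℤ)+3) * (a^2*t)^(m+2) * z < a^(m+3) * c := by
  have ha0 : (0:ℤ) < a := by linarith
  have hA0 : (0:ℤ) < a^(m+3) := pow_pos ha0 _
  have hA8 : (8:ℤ) ≤ a^(m+3) := by
    calc (8:ℤ) = 2^3 := by norm_num
    _ ≤ 2^(m+3) := pow_le_pow_right₀ (by norm_num) (by omega)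
    _ ≤ a^(m+3) := pow_le_pow_left₀ (by norm_num) (by linarith) _
  have hA2 : (64:ℤ) ≤ (a^(m+3))^2 := by
    have := pow_le_pow_left₀ (by norm_num : (0:ℤ) ≤ 8) hA8 2
    norm_num at this; exact this
  have hbA : a^(m+3) + 1 ≤ b := hakb
  have hb9 : (9:ℤ) ≤ b := by linarith
  have hb0 : (0:ℤ) < b := by linarith
  have hc10 : (10:ℤ) ≤ c := by linarith
  have hc0 : (0:ℤ) < c := by linarith
  have hbA0 : (0:ℤ) < b - a^(m+3) := by linarith
  have hK0 : (0:ℤ) < (m:ℤ)+3 := by positivity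
  have hm0 : (0:ℤ) ≤ (m:ℤ) := Int.natCast_nonneg m
  have hK3 : (3:ℤ) ≤ (m:ℤ)+3 := by linarith
  have hK20 : (2:ℤ) ≤ (m:ℤ)+2 := by linarith
  set y : ℤ := a^2*t with hydef
  set x : ℤ := r*s with hxdef
  have hy0 : (0:ℤ) < y := by rw [hydef]; exact mul_pos (pow_pos ha0 2) ht
  have hx0 : (0:ℤ) < x := by rw [hxdef]; exact mul_pos hr hs
  have hY : y^(m+3) = (a^(m+3))^2 * (b*c+1) := by
    rw [hydef, mul_pow, ← h3, ← pow_mul, ← pow_mul]; ring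
  have hX : x^(m+3) = (a^(m+3)*b+1)*(a^(m+3)*c+1) := by
    rw [hxdef, mul_pow, ← h1, ← h2]
  have hE : x^(m+3) - y^(m+3) = a^(m+3)*(b+c) + 1 - (a^(m+3))^2 := by
    rw [hX, hY]; ring
  clear_value x y
  have hAbA : (0:ℤ) ≤ a^(m+3)*(b - a^(m+3) - 1) := mul_nonneg hA0.le (by linarith)
  have hAc0 : (0:ℤ) < a^(m+3)*c := mul_pos hA0 hc0
  -- x > y
  have hEpos : (0:ℤ) < a^(m+3)*(b+c) + 1 - (a^(m+3))^2 := by linarith [hAbA, hAc0]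
  have hxy : y < x := by
    refine lt_of_pow_lt_pow_left₀ (m+3) hx0.le ?_
    linarith [hE, hEpos]
  have hzxy : z = x - y := hz
  have hz1 : (1:ℤ) ≤ z := by
    rw [hzxy]; linarith [Int.lt_iff_add_one_le.mp hxy]
  have hz0 : (0:ℤ) < z := by linarith
  have hxz : x = y + z := by rw [hzxy]; ring
  -- binomial lower bound
  have hbin : 2*y^(m+3) + 2*((m:ℤ)+3)*y^(m+2)*z + ((m:ℤ)+3)*((m:ℤ)+2)*y^(m+1)*z^2 + 2*z^(m+3)
      ≤ 2*x^(m+3) := by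
    have := binom_lb' m y z hy0.le hz0.le
    rwa [← hxz] at this
  have hzk : (1:ℤ) ≤ z^(m+3) := one_le_pow₀ hz1
  -- mean value upper bound : E ≤ (m+3) x^(m+2) z
  have hub : x^(m+3) - y^(m+3) ≤ ((m:ℤ)+3) * x^(m+2) * z := by
    have := pow_sub_pow_ub' (m+2) y z hy0.le hz0.le
    rw [← hxz] at this
    push_cast at this ⊢
    linarith
  -- E > a^(m+3) c
  have hEc : a^(m+3)*c < x^(m+3) - y^(m+3) := by
    rw [hE]; linarith [hAbA]
  have hZL : a^(m+3)*c < ((m:ℤ)+3) * x^(m+2) * z := lt_of_lt_of_le hEc hub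
  have hZL2 : (a^(m+3)*c)^2 < (((m:ℤ)+3) * x^(m+2) * z)^2 :=
    pow_lt_pow_left₀ hZL hAc0.le (by norm_num)
  -- (**)  (m+3) y^(m+2) < a^(m+3) (b+c)
  have hCC0 : ((m:ℤ)+3)*y^(m+2) < a^(m+3)*(b+c) := by
    have t1 : ((m:ℤ)+3)*y^(m+2) ≤ ((m:ℤ)+3)*y^(m+2)*z := by
      have := mul_nonneg (mul_nonneg hK0.le (pow_nonneg hy0.le (m+2))) (by linarith : (0:ℤ) ≤ z - 1)
      linarith [this]
    have t2 : (0:ℤ) ≤ ((m:ℤ)+3)*((m:ℤ)+2)*y^(m+1)*z^2 :=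
      mul_nonneg (mul_nonneg (mul_nonneg hK0.le (by linarith)) (pow_nonneg hy0.le _)) (sq_nonneg z)
    linarith [hbin, hE, hzk, t1, t2, hA2]
  -- raise to the (m+3)-th power and simplify: 2^(m+3) c > (m+3)^(m+3) A^(m+1) b^(m+2)
  have hCL : ((m:ℤ)+3)^(m+3)*(a^(m+3))^(m+1)*b^(m+2) < 2^(m+3)*c := by
    have hYlb : (a^(m+3))^2*(b*c) ≤ y^(m+3) := by
      rw [hY]; linarith [sq_nonneg (a^(m+3))]
    have hCC1 : ((m:ℤ)+3)^(m+3)*(((a^(m+3))^2*(b*c))^(m+2)) < (a^(m+3)*(2*c))^(m+3) := by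
      calc ((m:ℤ)+3)^(m+3)*(((a^(m+3))^2*(b*c))^(m+2))
          ≤ ((m:ℤ)+3)^(m+3)*((y^(m+3))^(m+2)) := by
            refine mul_le_mul_of_nonneg_left
              (pow_le_pow_left₀ (mul_nonneg (sq_nonneg _) (mul_pos hb0 hc0).le) hYlb _) ?_
            exact pow_nonneg hK0.le _
        _ = (((m:ℤ)+3)*y^(m+2))^(m+3) := by
            rw [mul_pow, ← pow_mul, ← pow_mul, Nat.mul_comm (m+3) (m+2)]
        _ < (a^(m+3)*(b+c))^(m+3) :=
            pow_lt_pow_left₀ hCC0 (mul_nonneg hK0.le (pow_nonneg hy0.le _)) (by omega)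
        _ ≤ (a^(m+3)*(2*c))^(m+3) := by
            refine pow_le_pow_left₀ (mul_nonneg hA0.le (by linarith)) ?_ _
            exact mul_le_mul_of_nonneg_left (by linarith) hA0.le
    have hpos : (0:ℤ) < (a^(m+3))^(m+3)*c^(m+2) := mul_pos (pow_pos hA0 _) (pow_pos hc0 _)
    refine lt_of_mul_lt_mul_right ?_ hpos.le
    calc (((m:ℤ)+3)^(m+3)*(a^(m+3))^(m+1)*b^(m+2))*((a^(m+3))^(m+3)*c^(m+2))
        = ((m:ℤ)+3)^(m+3)*(((a^(m+3))^2*(b*c))^(m+2)) := by ring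
      _ < (a^(m+3)*(2*c))^(m+3) := hCC1
      _ = (2^(m+3)*c)*((a^(m+3))^(m+3)*c^(m+2)) := by ring
  -- E ≤ 2 A c  and 72 A c ≤ Y
  have hE2 : x^(m+3) - y^(m+3) ≤ 2*(a^(m+3))*c := by
    have h' : (0:ℤ) ≤ a^(m+3)*(c - 1 - b) := mul_nonneg hA0.le (by linarith)
    rw [hE]; linarith [h', hA2, hA8]
  have h72 : 72*((a^(m+3))*c) ≤ y^(m+3) := by
    have hab72 : (72:ℤ) ≤ (a^(m+3))*b := by
      have := mul_le_mul hA8 hb9 (by norm_num) (by linarith : (0:ℤ) ≤ a^(m+3))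
      linarith
    have h1' : 72*((a^(m+3))*c) ≤ ((a^(m+3))*b)*((a^(m+3))*c) :=
      mul_le_mul_of_nonneg_right hab72 hAc0.le
    rw [hY]; linarith [h1', sq_nonneg (a^(m+3))]
  have hXY : 36*x^(m+3) ≤ 37*y^(m+3) := by linarith
  have h1296 : 1296*(x^(m+3))^2 ≤ 1369*(y^(m+3))^2 := by
    have h0 : (0:ℤ) ≤ 36*x^(m+3) := by positivity
    linarith [mul_self_le_mul_self h0 hXY]
  have hY91 : 90*y^(m+3) ≤ 91*((a^(m+3))^2*(b*c)) := by
    have hbc90 : (90:ℤ) ≤ b*c := by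
      have := mul_le_mul hb9 hc10 (by norm_num) (by linarith : (0:ℤ) ≤ b)
      linarith
    have h0 : (0:ℤ) ≤ (a^(m+3))^2*(b*c-90) := mul_nonneg (sq_nonneg _) (by linarith)
    rw [hY]; linarith [h0]
  -- (FIN) : 249158 (m+3) A b^2 ≤ 116640 (m+2) c
  have hFIN : 249158*((m:ℤ)+3)*(a^(m+3))*b^2 ≤ 116640*((m:ℤ)+2)*c := by
    have p1 : (2:ℤ)^m ≤ 3^m*8^m*9^m := by
      calc (2:ℤ)^m ≤ 216^m := pow_le_pow_left₀ (by norm_num) (by norm_num) m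
        _ = 3^m*8^m*9^m := by rw [show (216:ℤ) = 3*8*9 by norm_num, mul_pow, mul_pow]
    have q1 : (3:ℤ)^(m+2) ≤ ((m:ℤ)+3)^(m+2) := pow_le_pow_left₀ (by norm_num) (by linarith) _
    have q2 : (8:ℤ)^m ≤ (a^(m+3))^m := pow_le_pow_left₀ (by norm_num) hA8 _
    have q3 : (9:ℤ)^m ≤ b^m := pow_le_pow_left₀ (by norm_num) (by linarith) _
    have q5 : (3:ℤ)^(m+2)*8^m*9^m ≤ ((m:ℤ)+3)^(m+2)*(a^(m+3))^m*b^m := by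
      refine mul_le_mul (mul_le_mul q1 q2 (by positivity) (by positivity)) q3 (by positivity) ?_
      exact mul_nonneg (by positivity) (pow_nonneg hA0.le _)
    have hKAb : (0:ℤ) ≤ ((m:ℤ)+3)*((a^(m+3))*b^2) :=
      mul_nonneg hK0.le (mul_nonneg hA0.le (sq_nonneg b))
    have s1 : 249158*((m:ℤ)+3)*(a^(m+3))*b^2*(2^(m+3))
        ≤ 116640*((m:ℤ)+2)*(((m:ℤ)+3)^(m+3)*(a^(m+3))^(m+1)*b^(m+2)) := by
      calc 249158*((m:ℤ)+3)*(a^(m+3))*b^2*(2^(m+3))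
          = (1993264*(2^m))*(((m:ℤ)+3)*((a^(m+3))*b^2)) := by ring
        _ ≤ (1993264*(3^m*8^m*9^m))*(((m:ℤ)+3)*((a^(m+3))*b^2)) := by
            exact mul_le_mul_of_nonneg_right (mul_le_mul_of_nonneg_left p1 (by norm_num)) hKAb
        _ ≤ (2099520*(3^m*8^m*9^m))*(((m:ℤ)+3)*((a^(m+3))*b^2)) := by
            refine mul_le_mul_of_nonneg_right ?_ hKAb
            refine mul_le_mul_of_nonneg_right (by norm_num) (by positivity)
        _ = ((116640*2)*(((m:ℤ)+3)*((a^(m+3))*b^2)))*(3^(m+2)*8^m*9^m) := by ring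
        _ ≤ ((116640*((m:ℤ)+2))*(((m:ℤ)+3)*((a^(m+3))*b^2)))*(((m:ℤ)+3)^(m+2)*(a^(m+3))^m*b^m) := by
            refine mul_le_mul (mul_le_mul ?_ le_rfl hKAb (by positivity)) q5 (by positivity) ?_
            · linarith
            · exact mul_nonneg (by positivity) hKAb
        _ = 116640*((m:ℤ)+2)*(((m:ℤ)+3)^(m+3)*(a^(m+3))^(m+1)*b^(m+2)) := by ring
    have h2m : (0:ℤ) < 2^(m+3) := by positivity
    refine le_of_mul_le_mul_right ?_ h2m
    calc 249158*((m:ℤ)+3)*(a^(m+3))*b^2*(2^(m+3))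
        ≤ 116640*((m:ℤ)+2)*(((m:ℤ)+3)^(m+3)*(a^(m+3))^(m+1)*b^(m+2)) := s1
      _ ≤ 116640*((m:ℤ)+2)*(2^(m+3)*c) := mul_le_mul_of_nonneg_left hCL.le (by positivity)
      _ = 116640*((m:ℤ)+2)*c*2^(m+3) := by ring
  -- (MAIN) : 2 (m+3) (b-A) X^2 ≤ (m+2) A c^2 Y
  have hMAIN : 2*((m:ℤ)+3)*(b-a^(m+3))*(x^(m+3))^2 ≤ ((m:ℤ)+2)*(a^(m+3))*c^2*y^(m+3) := by
    have step1 : 2*((m:ℤ)+3)*(b-a^(m+3))*(x^(m+3))^2 ≤ 2*((m:ℤ)+3)*b*(x^(m+3))^2 := by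
      refine mul_le_mul_of_nonneg_right ?_ (sq_nonneg _)
      have := mul_pos hK0 hA0
      linarith
    have hKb0 : (0:ℤ) ≤ 2*((m:ℤ)+3)*b := by
      have := mul_pos hK0 hb0; linarith
    have step2 : 116640*(2*((m:ℤ)+3)*b*(x^(m+3))^2) ≤ 90*(2*((m:ℤ)+3)*b)*(1369*(y^(m+3))^2) := by
      calc 116640*(2*((m:ℤ)+3)*b*(x^(m+3))^2)
          = 90*(2*((m:ℤ)+3)*b)*(1296*(x^(m+3))^2) := by ring
        _ ≤ 90*(2*((m:ℤ)+3)*b)*(1369*(y^(m+3))^2) :=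
            mul_le_mul_of_nonneg_left h1296 (by linarith)
    have hKbY : (0:ℤ) ≤ 2738*(((m:ℤ)+3)*b)*y^(m+3) := by
      refine mul_nonneg (mul_nonneg (by norm_num) ?_) (pow_nonneg hy0.le _)
      exact (mul_pos hK0 hb0).le
    have step3 : 90*(2*((m:ℤ)+3)*b)*(1369*(y^(m+3))^2)
        ≤ (2738*(((m:ℤ)+3)*b)*y^(m+3))*(91*((a^(m+3))^2*(b*c))) := by
      calc 90*(2*((m:ℤ)+3)*b)*(1369*(y^(m+3))^2)
          = (2738*(((m:ℤ)+3)*b)*y^(m+3))*(90*y^(m+3)) := by ring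
        _ ≤ (2738*(((m:ℤ)+3)*b)*y^(m+3))*(91*((a^(m+3))^2*(b*c))) :=
            mul_le_mul_of_nonneg_left hY91 hKbY
    have hAcY : (0:ℤ) ≤ (a^(m+3))*c*y^(m+3) :=
      mul_nonneg hAc0.le (pow_nonneg hy0.le _)
    have step4 : (2738*(((m:ℤ)+3)*b)*y^(m+3))*(91*((a^(m+3))^2*(b*c)))
        ≤ (116640*((m:ℤ)+2)*c)*((a^(m+3))*c*y^(m+3)) := by
      calc (2738*(((m:ℤ)+3)*b)*y^(m+3))*(91*((a^(m+3))^2*(b*c)))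
          = (249158*((m:ℤ)+3)*(a^(m+3))*b^2)*((a^(m+3))*c*y^(m+3)) := by ring
        _ ≤ (116640*((m:ℤ)+2)*c)*((a^(m+3))*c*y^(m+3)) :=
            mul_le_mul_of_nonneg_right hFIN hAcY
    have final : 116640*(2*((m:ℤ)+3)*(b-a^(m+3))*(x^(m+3))^2)
        ≤ 116640*(((m:ℤ)+2)*(a^(m+3))*c^2*y^(m+3)) := by
      have e : (116640*((m:ℤ)+2)*c)*((a^(m+3))*c*y^(m+3))
          = 116640*(((m:ℤ)+2)*(a^(m+3))*c^2*y^(m+3)) := by ring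
      linarith [step1, step2, step3, step4, e]
    linarith
  -- (B) : 2 A (b-A) < (m+3)(m+2) y^(m+1) z^2
  have hB : 2*(a^(m+3))*(b-a^(m+3)) < ((m:ℤ)+3)*((m:ℤ)+2)*y^(m+1)*z^2 := by
    have hT0 : (x^(m+2))^2*y^2 ≤ (x^(m+3))^2 := by
      have h' : (x^(m+2))^2*y^2 ≤ (x^(m+2))^2*x^2 :=
        mul_le_mul_of_nonneg_left (pow_le_pow_left₀ hy0.le hxy.le 2) (sq_nonneg _)
      calc (x^(m+2))^2*y^2 ≤ (x^(m+2))^2*x^2 := h'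
        _ = (x^(m+3))^2 := by ring
    have hKbAy : (0:ℤ) < 2*((m:ℤ)+3)*(b-a^(m+3))*y^2 := by
      have := mul_pos (mul_pos (mul_pos (by norm_num : (0:ℤ) < 2) hK0) hbA0) (pow_pos hy0 2)
      exact this
    have hU : 2*((m:ℤ)+3)*(b-a^(m+3))*y^2*((a^(m+3))^2*c^2)
        < (((m:ℤ)+3)^2*z^2)*(((m:ℤ)+2)*(a^(m+3))*c^2*y^(m+3)) := by
      calc 2*((m:ℤ)+3)*(b-a^(m+3))*y^2*((a^(m+3))^2*c^2)
          = 2*((m:ℤ)+3)*(b-a^(m+3))*y^2*((a^(m+3)*c)^2) := by ring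
        _ < 2*((m:ℤ)+3)*(b-a^(m+3))*y^2*((((m:ℤ)+3)*x^(m+2)*z)^2) :=
            mul_lt_mul_of_pos_left hZL2 hKbAy
        _ = (((m:ℤ)+3)^2*z^2)*(2*((m:ℤ)+3)*(b-a^(m+3))*((x^(m+2))^2*y^2)) := by ring
        _ ≤ (((m:ℤ)+3)^2*z^2)*(2*((m:ℤ)+3)*(b-a^(m+3))*(x^(m+3))^2) := by
            refine mul_le_mul_of_nonneg_left ?_ (by positivity)
            refine mul_le_mul_of_nonneg_left hT0 ?_
            have := mul_pos (mul_pos (by norm_num : (0:ℤ) < 2) hK0) hbA0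
            linarith
        _ ≤ (((m:ℤ)+3)^2*z^2)*(((m:ℤ)+2)*(a^(m+3))*c^2*y^(m+3)) :=
            mul_le_mul_of_nonneg_left hMAIN (by positivity)
    have hpos : (0:ℤ) < ((m:ℤ)+3)*(a^(m+3))*c^2*y^2 :=
      mul_pos (mul_pos (mul_pos hK0 hA0) (pow_pos hc0 2)) (pow_pos hy0 2)
    refine lt_of_mul_lt_mul_right ?_ hpos.le
    calc (2*(a^(m+3))*(b-a^(m+3)))*(((m:ℤ)+3)*(a^(m+3))*c^2*y^2)
        = 2*((m:ℤ)+3)*(b-a^(m+3))*y^2*((a^(m+3))^2*c^2) := by ring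
      _ < (((m:ℤ)+3)^2*z^2)*(((m:ℤ)+2)*(a^(m+3))*c^2*y^(m+3)) := hU
      _ = (((m:ℤ)+3)*((m:ℤ)+2)*y^(m+1)*z^2)*(((m:ℤ)+3)*(a^(m+3))*c^2*y^2) := by ring
  -- conclude
  have h2E : 2*(x^(m+3) - y^(m+3)) = 2*(a^(m+3))*(b-a^(m+3)) + 2*(a^(m+3))*c + 2 := by
    rw [hE]; ring
  linarith [hbin, hzk, hB, h2E]

/-- For `k = 4` or `k` prime, and a `k`-th power Diophantine triple `{a^k, b, c}`
with `z := rs - a²t`, one has `a^k c > k (a^{2k}(bc+1))^{(k-1)/k} z`. -/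
theorem akc_gt_rpow_bound
    (k : ℕ) (a b c r s t z : ℤ) (hk : 3 ≤ k) (hk4 : k = 4 ∨ Nat.Prime k)
    (ha : 1 < a) (hab : a < b) (hbc : b < c) (hakb : a ^ k < b)
    (hr : 0 < r) (hs : 0 < s) (ht : 0 < t)
    (h1 : a ^ k * b + 1 = r ^ k) (h2 : a ^ k * c + 1 = s ^ k)
    (h3 : b * c + 1 = t ^ k) (hz : z = r * s - a ^ 2 * t) :
    ((a : ℝ) ^ k * c) >
      (k : ℝ) * ((a : ℝ) ^ (2 * k) * (b * c + 1)) ^ (((k : ℝ) - 1) / k) * z := by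
  obtain ⟨m, rfl⟩ : ∃ m, k = m + 3 := ⟨k - 3, by omega⟩
  have hcore := core_int m a b c r s t z ha hab hbc hakb hr hs ht h1 h2 h3 hz
  have ha0 : (0:ℤ) < a := by linarith
  have haR : (0:ℝ) < (a:ℝ) := by exact_mod_cast ha0
  have htR : (0:ℝ) < (t:ℝ) := by exact_mod_cast ht
  have hw : (0:ℝ) < (a:ℝ)^2*(t:ℝ) := mul_pos (pow_pos haR 2) htR
  have hbase : (a:ℝ)^(2*(m+3))*((b:ℝ)*(c:ℝ)+1) = ((a:ℝ)^2*(t:ℝ))^(m+3) := by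
    have h3' : ((b:ℝ)*(c:ℝ)+1) = (t:ℝ)^(m+3) := by exact_mod_cast h3
    rw [h3', pow_mul, ← mul_pow]
  have hrpow : (((a:ℝ)^2*(t:ℝ))^(m+3)) ^ ((((m+3:ℕ):ℝ)-1)/((m+3:ℕ):ℝ))
      = ((a:ℝ)^2*(t:ℝ))^(m+2) := by
    rw [← Real.rpow_natCast ((a:ℝ)^2*(t:ℝ)) (m+3), ← Real.rpow_mul hw.le]
    have hne : ((m+3:ℕ):ℝ) ≠ 0 := Nat.cast_ne_zero.mpr (by omega)
    have hexp : ((m+3:ℕ):ℝ) * ((((m+3:ℕ):ℝ)-1)/((m+3:ℕ):ℝ)) = ((m+2:ℕ):ℝ) := by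
      field_simp
      push_cast
      ring
    rw [hexp, Real.rpow_natCast]
  have hcast : ((m:ℝ)+3) * ((a:ℝ)^2*(t:ℝ))^(m+2) * (z:ℝ) < (a:ℝ)^(m+3)*(c:ℝ) := by
    exact_mod_cast hcore
  rw [gt_iff_lt, hbase, hrpow]
  push_cast
  linarith [hcast]
end

section
/- Let k ≥ 3 be either 4 or a prime, and let 1 < a < b < c be integers with a^k < b < c such that a^k·b + 1 = r^k, a^k·c + 1 = s^k, and b·c + 1 = t^k for positive integers r, s, t, and set z := r·s − a^2·t (a positive integer). Then a^k·c > k^k·z^k·(a^k·b)^{k−1}. -/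
/-- Binomial lower bound: `(y+z)^(m+2) ≥ y^(m+2) + (m+2)y^(m+1)z + C(m+2,2)y^m z²`
for nonnegative `y, z`. -/
lemma bin_aux_s8 (m : ℕ) (y z : ℤ) (hy : 0 ≤ y) (hz : 0 ≤ z) :
    y ^ (m + 2) + ((m : ℤ) + 2) * y ^ (m + 1) * z
      + (Nat.choose (m + 2) 2 : ℤ) * y ^ m * z ^ 2 ≤ (y + z) ^ (m + 2) := by
  induction m with
  | zero =>
      have h : (Nat.choose 2 2 : ℤ) = 1 := by norm_num
      rw [h]; ring_nf; nlinarith [sq_nonneg (y + z)]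
  | succ n ih =>
      have hch : (Nat.choose (n + 3) 2 : ℤ) = (Nat.choose (n + 2) 2 : ℤ) + ((n : ℤ) + 2) := by
        have : Nat.choose (n + 3) 2 = Nat.choose (n + 2) 1 + Nat.choose (n + 2) 2 :=
          Nat.choose_succ_succ (n + 2) 1
        rw [this, Nat.choose_one_right]
        push_cast
        ring
      have hmul := mul_le_mul_of_nonneg_left ih (by linarith : (0:ℤ) ≤ y + z)
      have hcube : 0 ≤ (Nat.choose (n + 2) 2 : ℤ) * y ^ n * z ^ 3 := by positivity
      have hexp : (y + z) * (y ^ (n + 2) + ((n : ℤ) + 2) * y ^ (n + 1) * z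
          + (Nat.choose (n + 2) 2 : ℤ) * y ^ n * z ^ 2)
          = y ^ (n + 3) + ((n : ℤ) + 3) * y ^ (n + 2) * z
            + ((Nat.choose (n + 2) 2 : ℤ) + ((n : ℤ) + 2)) * y ^ (n + 1) * z ^ 2
            + (Nat.choose (n + 2) 2 : ℤ) * y ^ n * z ^ 3 := by ring
      have hpow : (y + z) * (y + z) ^ (n + 2) = (y + z) ^ (n + 3) := by ring
      have : ((n : ℤ) + 1) + 2 = (n : ℤ) + 3 := by ring
      calc y ^ (n + 1 + 2) + (((n : ℕ) + 1 : ℤ) + 2) * y ^ (n + 1 + 1) * z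
            + (Nat.choose (n + 1 + 2) 2 : ℤ) * y ^ (n + 1) * z ^ 2
          = y ^ (n + 3) + ((n : ℤ) + 3) * y ^ (n + 2) * z
            + ((Nat.choose (n + 2) 2 : ℤ) + ((n : ℤ) + 2)) * y ^ (n + 1) * z ^ 2 := by
            rw [show n + 1 + 2 = n + 3 from rfl, show n + 1 + 1 = n + 2 from rfl, hch]
            push_cast; ring
        _ ≤ (y + z) * (y ^ (n + 2) + ((n : ℤ) + 2) * y ^ (n + 1) * z
            + (Nat.choose (n + 2) 2 : ℤ) * y ^ n * z ^ 2) := by rw [hexp]; linarith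
        _ ≤ (y + z) * (y + z) ^ (n + 2) := hmul
        _ = (y + z) ^ (n + 1 + 2) := by ring

/-- For `k = 4` or `k` prime, and a `k`-th power Diophantine triple `{a^k, b, c}`
with `z := rs - a²t`, one has `a^k c > k^k z^k (a^k b)^{k-1}`. -/
theorem akc_gt_power_bound
    (k : ℕ) (a b c r s t z : ℤ) (hk : 3 ≤ k) (hk4 : k = 4 ∨ Nat.Prime k)
    (ha : 1 < a) (hab : a < b) (hbc : b < c) (hakb : a ^ k < b)
    (hr : 0 < r) (hs : 0 < s) (ht : 0 < t)
    (h1 : a ^ k * b + 1 = r ^ k) (h2 : a ^ k * c + 1 = s ^ k)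
    (h3 : b * c + 1 = t ^ k) (hz : z = r * s - a ^ 2 * t) :
    a ^ k * c > (k : ℤ) ^ k * z ^ k * (a ^ k * b) ^ (k - 1) := by
  obtain ⟨m, rfl⟩ : ∃ m, k = m + 2 := ⟨k - 2, by omega⟩
  have hm : 1 ≤ m := by omega
  have hm' : (1 : ℤ) ≤ (m : ℤ) := by exact_mod_cast hm
  have ha0 : (0:ℤ) < a := by linarith
  have hb0 : (0:ℤ) < b := by linarith
  have hc0 : (0:ℤ) < c := by linarith
  set y : ℤ := a ^ 2 * t with hy_def
  have hy0 : 0 < y := by positivity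
  have hy1 : (1:ℤ) ≤ y := hy0
  set B : ℤ := a ^ (m + 2) * b with hB_def
  set C : ℤ := a ^ (m + 2) * c with hC_def
  set A : ℤ := a ^ (m + 2) * a ^ (m + 2) with hA_def
  have hak0 : (0:ℤ) < a ^ (m + 2) := by positivity
  have hB0 : 0 < B := by positivity
  have hC0 : 0 < C := by positivity
  have hA0 : 0 < A := by positivity
  have hA1 : 1 ≤ A := hA0
  have hAB : A < B := by
    rw [hA_def, hB_def]; exact mul_lt_mul_of_pos_left hakb hak0
  have hBC : B < C := by
    rw [hB_def, hC_def]; exact mul_lt_mul_of_pos_left hbc hak0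
  have hyk : y ^ (m + 2) = B * C + A := by
    rw [hy_def, hB_def, hC_def, hA_def]
    calc (a ^ 2 * t) ^ (m + 2) = (a ^ (m + 2) * a ^ (m + 2)) * t ^ (m + 2) := by ring
      _ = (a ^ (m + 2) * a ^ (m + 2)) * (b * c + 1) := by rw [← h3]
      _ = a ^ (m + 2) * b * (a ^ (m + 2) * c) + a ^ (m + 2) * a ^ (m + 2) := by ring
  have hxk : (r * s) ^ (m + 2) = B * C + B + C + 1 := by
    rw [mul_pow, ← h1, ← h2, hB_def, hC_def]; ring
  have hrs0 : 0 < r * s := mul_pos hr hs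
  have hxy : y < r * s := by
    have h : y ^ (m + 2) < (r * s) ^ (m + 2) := by
      rw [hyk, hxk]; linarith
    exact lt_of_pow_lt_pow_left₀ _ hrs0.le h
  have hz0 : 0 < z := by rw [hz]; rw [hy_def] at hxy; linarith
  have hz1 : (1:ℤ) ≤ z := hz0
  have hrs_eq : r * s = y + z := by rw [hz, hy_def]; ring
  have hbin := bin_aux_s8 m y z hy0.le hz0.le
  rw [← hrs_eq, hxk, hyk] at hbin
  have key : ((m : ℤ) + 2) * y ^ (m + 1) * z
      + (Nat.choose (m + 2) 2 : ℤ) * y ^ m * z ^ 2 ≤ B + C + 1 - A := by linarith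
  -- choose (m+2) 2 ≥ 3
  have hch3 : (3 : ℤ) ≤ (Nat.choose (m + 2) 2 : ℤ) := by
    have h := Nat.choose_le_choose 2 (show 3 ≤ m + 2 by omega)
    have h3' : Nat.choose 3 2 = 3 := by norm_num [Nat.choose]
    rw [h3'] at h; exact_mod_cast h
  have hym : y ≤ y ^ m := by
    calc y = y ^ 1 := (pow_one y).symm
      _ ≤ y ^ m := pow_le_pow_right₀ hy1 hm
  have hzsq : (1:ℤ) ≤ z ^ 2 := by nlinarith
  have hterm2 : 3 * y ≤ (Nat.choose (m + 2) 2 : ℤ) * y ^ m * z ^ 2 := by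
    have hymnn : (0:ℤ) ≤ y ^ m := pow_nonneg hy0.le m
    have h1' : 3 * y ≤ (Nat.choose (m + 2) 2 : ℤ) * y ^ m := by
      calc 3 * y ≤ 3 * y ^ m := by linarith
        _ ≤ (Nat.choose (m + 2) 2 : ℤ) * y ^ m := mul_le_mul_of_nonneg_right hch3 hymnn
    have h2' : (Nat.choose (m + 2) 2 : ℤ) * y ^ m * 1 ≤ (Nat.choose (m + 2) 2 : ℤ) * y ^ m * z ^ 2 :=
      mul_le_mul_of_nonneg_left hzsq (by positivity)
    linarith
  have hterm2' : 0 ≤ (Nat.choose (m + 2) 2 : ℤ) * y ^ m * z ^ 2 := by positivity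
  have hlin0 : 0 ≤ ((m : ℤ) + 2) * y ^ (m + 1) := by positivity
  have h2C : ((m : ℤ) + 2) * y ^ (m + 1) < 2 * C := by
    have h5 : ((m : ℤ) + 2) * y ^ (m + 1) * 1 ≤ ((m : ℤ) + 2) * y ^ (m + 1) * z :=
      mul_le_mul_of_nonneg_left hz1 hlin0
    linarith
  have hykBC : B * C < y ^ (m + 2) := by rw [hyk]; linarith
  have hkB : ((m : ℤ) + 2) * B < 2 * y := by
    have h6 : ((m : ℤ) + 2) * (B * C) < ((m : ℤ) + 2) * y ^ (m + 2) :=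
      mul_lt_mul_of_pos_left hykBC (by linarith)
    have h7 : ((m : ℤ) + 2) * y ^ (m + 2) = (((m : ℤ) + 2) * y ^ (m + 1)) * y := by ring
    have h8 : (((m : ℤ) + 2) * y ^ (m + 1)) * y < (2 * C) * y :=
      mul_lt_mul_of_pos_right h2C hy0
    have h9 : (((m : ℤ) + 2) * B) * C < (2 * y) * C := by linarith
    exact lt_of_mul_lt_mul_right h9 hC0.le
  have hyB : B < 3 * y := by
    have hmB : B ≤ (m : ℤ) * B := le_mul_of_one_le_left hB0.le hm'
    linarith
  have hmain : ((m : ℤ) + 2) * y ^ (m + 1) * z < C := by linarith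
  have hLHSnn : 0 ≤ ((m : ℤ) + 2) * y ^ (m + 1) * z := by positivity
  have hpow : (((m : ℤ) + 2) * y ^ (m + 1) * z) ^ (m + 2) < C ^ (m + 2) :=
    pow_lt_pow_left₀ hmain hLHSnn (by omega)
  have hexpand : (((m : ℤ) + 2) * y ^ (m + 1) * z) ^ (m + 2)
      = ((m : ℤ) + 2) ^ (m + 2) * z ^ (m + 2) * (B * C + A) ^ (m + 1) := by
    have hy' : (y ^ (m + 1)) ^ (m + 2) = (B * C + A) ^ (m + 1) := by
      rw [← hyk, ← pow_mul, ← pow_mul, Nat.mul_comm]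
    rw [mul_pow, mul_pow, hy']; ring
  have hBCpow : B ^ (m + 1) * C ^ (m + 1) ≤ (B * C + A) ^ (m + 1) := by
    calc B ^ (m + 1) * C ^ (m + 1) = (B * C) ^ (m + 1) := (mul_pow B C (m + 1)).symm
      _ ≤ (B * C + A) ^ (m + 1) := pow_le_pow_left₀ (by positivity) (by linarith) _
  have hfin1 : ((m : ℤ) + 2) ^ (m + 2) * z ^ (m + 2) * (B ^ (m + 1) * C ^ (m + 1))
      ≤ ((m : ℤ) + 2) ^ (m + 2) * z ^ (m + 2) * (B * C + A) ^ (m + 1) := by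
    apply mul_le_mul_of_nonneg_left hBCpow
    positivity
  have hfin2 : (((m : ℤ) + 2) ^ (m + 2) * z ^ (m + 2) * B ^ (m + 1)) * C ^ (m + 1)
      < C * C ^ (m + 1) := by
    have hCk : C ^ (m + 2) = C * C ^ (m + 1) := by ring
    calc (((m : ℤ) + 2) ^ (m + 2) * z ^ (m + 2) * B ^ (m + 1)) * C ^ (m + 1)
        = ((m : ℤ) + 2) ^ (m + 2) * z ^ (m + 2) * (B ^ (m + 1) * C ^ (m + 1)) := by ring
      _ ≤ ((m : ℤ) + 2) ^ (m + 2) * z ^ (m + 2) * (B * C + A) ^ (m + 1) := hfin1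
      _ = (((m : ℤ) + 2) * y ^ (m + 1) * z) ^ (m + 2) := hexpand.symm
      _ < C ^ (m + 2) := hpow
      _ = C * C ^ (m + 1) := hCk
  have hfin : ((m : ℤ) + 2) ^ (m + 2) * z ^ (m + 2) * B ^ (m + 1) < C := by
    have := lt_of_mul_lt_mul_right hfin2 (by positivity : (0:ℤ) ≤ C ^ (m + 1))
    exact this
  show C > ((m + 2 : ℕ) : ℤ) ^ (m + 2) * z ^ (m + 2) * (a ^ (m + 2) * b) ^ (m + 2 - 1)
  have hcast : ((m + 2 : ℕ) : ℤ) = (m : ℤ) + 2 := by push_cast; ring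
  rw [show m + 2 - 1 = m + 1 from rfl, hcast, ← hB_def]
  exact hfin
end

section
/- Let k ≥ 3 and 1 < a < b < c be integers with a^k < b < c such that a^k·b + 1 = r^k, a^k·c + 1 = s^k, and b·c + 1 = t^k for positive integers r, s, t. Then |(1 + 1/(a^k·b))^{1/k} − (r·s)/(a^2·t)| < (a^k·b)/(k·(a^2·t)^k), where (1 + 1/(a^k·b))^{1/k} denotes the real positive k-th root. -/
set_option maxHeartbeats 1000000


/-- For a `k`-th power Diophantine triple `{a^k, b, c}` witnessed by `r, s, t`,
one has `|(1 + 1/(a^k b))^{1/k} - rs/(a² t)| < a^k b / (k (a² t)^k)`. -/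
theorem kth_root_rational_approx
    (k : ℕ) (a b c r s t : ℤ) (hk : 3 ≤ k)
    (ha : 1 < a) (hab : a < b) (hbc : b < c) (hakb : a ^ k < b)
    (hr : 0 < r) (hs : 0 < s) (ht : 0 < t)
    (h1 : a ^ k * b + 1 = r ^ k) (h2 : a ^ k * c + 1 = s ^ k)
    (h3 : b * c + 1 = t ^ k) :
    |(1 + 1 / ((a : ℝ) ^ k * b)) ^ ((1 : ℝ) / k) - (r : ℝ) * s / ((a : ℝ) ^ 2 * t)| <
      (a : ℝ) ^ k * b / ((k : ℝ) * ((a : ℝ) ^ 2 * t) ^ k) := by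
  have hk0 : 0 < k := by omega
  have ha0 : (0:ℤ) < a := by linarith
  have hb0 : (0:ℤ) < b := by linarith
  have hc0 : (0:ℤ) < c := by linarith
  have hak : (0:ℤ) < a ^ k := pow_pos ha0 k
  -- key integer identity
  have key : r ^ k * s ^ k = a ^ (2*k) * t ^ k + (a^k*b + a^k*c + 1 - a^(2*k)) := by
    have h3' : b * c = t ^ k - 1 := by linarith
    calc r ^ k * s ^ k = (a^k*b+1) * (a^k*c+1) := by rw [← h1, ← h2]
      _ = a^k*a^k*(b*c) + (a^k*b + a^k*c + 1) := by ring
      _ = a^k*a^k*(t^k-1) + (a^k*b + a^k*c + 1) := by rw [h3']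
      _ = _ := by ring
  have hD : (0:ℤ) < a^k*b + a^k*c + 1 - a^(2*k) := by
    have hcc : a^k * a^k < a^k * c := by
      apply mul_lt_mul_of_pos_left _ hak; linarith
    have h2k : a^(2*k) = a^k * a^k := by ring
    nlinarith [mul_pos hak hb0]
  -- the crucial integer bounds
  have hE : (a^k*b) * (a^k*b + a^k*c + 1 - a^(2*k)) - a^(2*k) * t^k
      = (b - a^k) * (a^(2*k)*b + a^k) := by
    rw [← h3]; ring
  have hlow : (0:ℤ) < (a^k*b) * (a^k*b + a^k*c + 1 - a^(2*k)) - a^(2*k) * t^k := by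
    rw [hE]
    apply mul_pos (by linarith)
    have : (0:ℤ) < a^(2*k) := pow_pos ha0 _
    nlinarith
  have hhigh : (a^k*b) * (a^k*b + a^k*c + 1 - a^(2*k)) - a^(2*k) * t^k < (a^k*b)^2 := by
    rw [hE]
    have h2k : a^(2*k) = a^k * a^k := by ring
    have h1a : (1:ℤ) ≤ a^k := hak
    nlinarith [mul_pos hak hb0, mul_pos (mul_pos hak hak) hb0]
  -- real setup
  have haR : (1:ℝ) < (a:ℝ) := by exact_mod_cast ha
  have haR0 : (0:ℝ) < (a:ℝ) := by linarith
  have hbR : (0:ℝ) < (b:ℝ) := by exact_mod_cast hb0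
  have htR : (0:ℝ) < (t:ℝ) := by exact_mod_cast ht
  have hrR : (0:ℝ) < (r:ℝ) := by exact_mod_cast hr
  have hsR : (0:ℝ) < (s:ℝ) := by exact_mod_cast hs
  set A : ℝ := (a:ℝ)^k * b with hAdef
  set P : ℝ := (a:ℝ)^2 * t with hPdef
  have hA0 : 0 < A := mul_pos (pow_pos haR0 k) hbR
  have hP0 : 0 < P := mul_pos (pow_pos haR0 2) htR
  have hT0 : 0 < P ^ k := pow_pos hP0 k
  set α : ℝ := (1 + 1/A) ^ ((1:ℝ)/k) with hαdef
  set B : ℝ := (r:ℝ) * s / P with hBdef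
  have h1A : (0:ℝ) < 1 + 1/A := by positivity
  have h1A1 : (1:ℝ) < 1 + 1/A := by
    have : 0 < 1/A := by positivity
    linarith
  have hkR : (0:ℝ) < (k:ℝ) := by exact_mod_cast hk0
  have hαk : α ^ k = 1 + 1/A := by
    rw [hαdef, ← Real.rpow_natCast ((1 + 1/A) ^ ((1:ℝ)/k)) k, ← Real.rpow_mul h1A.le]
    rw [one_div_mul_cancel (ne_of_gt hkR), Real.rpow_one]
  have hα1 : 1 < α := by
    rw [hαdef]
    rw [Real.one_lt_rpow_iff_of_pos h1A]
    exact Or.inl ⟨h1A1, by positivity⟩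
  set DR : ℝ := (a:ℝ)^k*b + (a:ℝ)^k*c + 1 - (a:ℝ)^(2*k) with hDRdef
  have hDR0 : 0 < DR := by
    have : ((a^k*b + a^k*c + 1 - a^(2*k) : ℤ) : ℝ) = DR := by push_cast; ring
    rw [← this]; exact_mod_cast hD
  have hTeq : P ^ k = (a:ℝ)^(2*k) * (t:ℝ)^k := by rw [hPdef]; ring
  have hBk : B ^ k = 1 + DR / P ^ k := by
    rw [hBdef, div_pow, mul_pow]
    have hcast : (r:ℝ)^k * (s:ℝ)^k = (a:ℝ)^(2*k) * (t:ℝ)^k + DR := by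
      have h := congrArg (fun z : ℤ => (z:ℝ)) key
      push_cast at h
      rw [hDRdef]; linarith
    rw [hcast, ← hTeq]
    field_simp
  have hB0 : 0 < B := by rw [hBdef]; positivity
  have hB1 : 1 < B := by
    by_contra h
    push_neg at h
    have : B ^ k ≤ 1 := pow_le_one₀ hB0.le h
    rw [hBk] at this
    have : 0 < DR / P ^ k := div_pos hDR0 hT0
    linarith
  -- geometric sum bound
  have hgs := geom_sum₂_mul α B k
  have hsum : (k:ℝ) ≤ ∑ i ∈ Finset.range k, α ^ i * B ^ (k - 1 - i) := by
    calc (k:ℝ) = ∑ _i ∈ Finset.range k, (1:ℝ) := by simp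
      _ ≤ _ := by
        apply Finset.sum_le_sum
        intro i _
        have h1 : (1:ℝ) ≤ α ^ i := one_le_pow₀ hα1.le
        have h2 : (1:ℝ) ≤ B ^ (k - 1 - i) := one_le_pow₀ hB1.le
        nlinarith
  have hstep : (k:ℝ) * |α - B| ≤ |α ^ k - B ^ k| := by
    rw [← hgs, abs_mul]
    have habs : |∑ i ∈ Finset.range k, α ^ i * B ^ (k - 1 - i)|
        = ∑ i ∈ Finset.range k, α ^ i * B ^ (k - 1 - i) := by
      exact abs_of_nonneg (le_trans (Nat.cast_nonneg k) hsum)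
    rw [habs]
    exact mul_le_mul_of_nonneg_right hsum (abs_nonneg _)
  -- bound on |α^k - B^k|
  have hdiff : α ^ k - B ^ k = (P^k - A * DR) / (A * P^k) := by
    rw [hαk, hBk]
    field_simp
    ring
  have hcastA : ((a^k*b : ℤ) : ℝ) = A := by push_cast; rw [hAdef]
  have hcastT : ((a^(2*k) * t^k : ℤ) : ℝ) = P ^ k := by rw [hTeq]; push_cast; ring
  have hnum1 : P ^ k - A * DR < 0 := by
    have := hlow
    have h' : (0:ℝ) < A * DR - P ^ k := by
      have : ((((a^k*b) * (a^k*b + a^k*c + 1 - a^(2*k)) - a^(2*k) * t^k) : ℤ) : ℝ)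
          = A * DR - P ^ k := by
        push_cast
        rw [hAdef, hDRdef, hTeq]
      rw [← this]; exact_mod_cast hlow
    linarith
  have hnum2 : A * DR - P ^ k < A ^ 2 := by
    have : ((((a^k*b) * (a^k*b + a^k*c + 1 - a^(2*k)) - a^(2*k) * t^k) : ℤ) : ℝ)
        = A * DR - P ^ k := by
      push_cast
      rw [hAdef, hDRdef, hTeq]
    have h2 : (((a^k*b)^2 : ℤ) : ℝ) = A ^ 2 := by push_cast; rw [hAdef]
    calc A * DR - P ^ k = _ := this.symm
      _ < (((a^k*b)^2 : ℤ) : ℝ) := by exact_mod_cast hhigh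
      _ = A ^ 2 := h2
  have hbound : |α ^ k - B ^ k| < A / P ^ k := by
    rw [hdiff, abs_div, abs_of_pos (mul_pos hA0 hT0), abs_of_neg hnum1, neg_sub]
    rw [div_lt_div_iff₀ (mul_pos hA0 hT0) hT0]
    nlinarith [mul_lt_mul_of_pos_right hnum2 hT0]
  -- conclude
  have hfinal : (k:ℝ) * |α - B| < A / P ^ k := lt_of_le_of_lt hstep hbound
  rw [lt_div_iff₀ (by positivity : (0:ℝ) < (k:ℝ) * P ^ k)]
  calc |α - B| * ((k:ℝ) * P ^ k) = ((k:ℝ) * |α - B|) * P ^ k := by ring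
    _ < (A / P^k) * P^k := mul_lt_mul_of_pos_right hfinal hT0
    _ = A := div_mul_cancel₀ A (ne_of_gt hT0)
end

section
/- Let 1 < a < b < c be integers with a^4 < b < c such that a^4·b + 1 = r^4, a^4·c + 1 = s^4, and b·c + 1 = t^4 for positive integers r, s, t, and set z := r·s − a^2·t (a positive integer). Then s > 3·r^3·z. -/
private lemma aux_u2 (r s U a8 : ℤ) (hr2 : 2 ≤ r) (hs4 : r ^ 4 < s ^ 4) (ha8 : 0 ≤ a8)
    (hU4 : U ^ 4 = (r ^ 4 - 1) * (s ^ 4 - 1) + a8) :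
    (s ^ 2 * (r ^ 2 - 1)) ^ 2 ≤ (U ^ 2) ^ 2 := by
  nlinarith [mul_le_mul_of_nonneg_left hs4.le (by nlinarith : (0:ℤ) ≤ 2 * r ^ 2 - 2),
    pow_pos (by linarith : (0:ℤ) < r) 4]

private lemma aux_sge (r s : ℤ) (hr2 : 2 ≤ r) (h6 : 4 * r ^ 4 - 4 * r ^ 2 + 1 ≤ 2 * r * s) :
    2 * r ^ 2 ≤ s := by
  nlinarith [mul_nonneg (sub_nonneg.2 hr2) (by linarith : (0:ℤ) ≤ r + 1), sq_nonneg r,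
    mul_pos (by linarith : (0:ℤ) < r) (by linarith : (0:ℤ) < r)]

private lemma aux_fin (r s a8 : ℤ) (hr2 : 2 ≤ r) (ha8 : 0 ≤ a8)
    (hs416 : (2 * r ^ 2) ^ 4 ≤ s ^ 4) :
    3 * r ^ 4 * (r ^ 4 + s ^ 4 - 1 - a8) < s ^ 4 * (2 * r ^ 2 - 1) ^ 2 := by
  have hr0 : (0:ℤ) < r := by linarith
  have h24 : (0:ℤ) ≤ r ^ 2 - 4 := by nlinarith
  have h44 : (0:ℤ) ≤ r ^ 4 - 4 * r ^ 2 := by nlinarith [mul_nonneg (sq_nonneg r) h24]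
  nlinarith [mul_nonneg (sub_nonneg.2 hs416) h44, mul_nonneg h24 (pow_nonneg hr0.le 10),
    pow_pos hr0 4, pow_pos hr0 8, mul_nonneg (pow_nonneg hr0.le 4) ha8]

/-- For a 4-th power Diophantine triple `{a⁴, b, c}` with `z := rs - a²t`,
one has `s > 3 r³ z`. -/
theorem s_gt_three_r_cubed_z
    (a b c r s t z : ℤ)
    (ha : 1 < a) (hab : a < b) (hbc : b < c) (hakb : a ^ 4 < b)
    (hr : 0 < r) (hs : 0 < s) (ht : 0 < t)
    (h1 : a ^ 4 * b + 1 = r ^ 4) (h2 : a ^ 4 * c + 1 = s ^ 4)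
    (h3 : b * c + 1 = t ^ 4) (hz : z = r * s - a ^ 2 * t) :
    s > 3 * r ^ 3 * z := by
  set U : ℤ := a ^ 2 * t with hU_def
  set X : ℤ := r * s + U with hX_def
  set Y : ℤ := (r * s) ^ 2 + U ^ 2 with hY_def
  have haz : 0 < a := by linarith
  have hU : 0 < U := mul_pos (pow_pos haz 2) ht
  have hXpos : 0 < X := by positivity
  have hYpos : 0 < Y := by positivity
  have ha8 : (0:ℤ) ≤ a ^ 8 := by positivity
  -- r ≥ 2
  have ha4 : (16:ℤ) ≤ a ^ 4 := by
    have h2a : (2:ℤ) ≤ a := ha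
    have := pow_le_pow_left₀ (by norm_num : (0:ℤ) ≤ 2) h2a 4
    norm_num at this
    linarith
  have hb17 : (17:ℤ) ≤ b := by linarith
  have hr4 : (17:ℤ) ≤ r ^ 4 := by
    have := mul_le_mul ha4 hb17 (by norm_num) (by linarith : (0:ℤ) ≤ a ^ 4)
    linarith
  have hr2 : (2:ℤ) ≤ r := by
    by_contra h
    push_neg at h
    interval_cases r <;> norm_num at hr4
  have hr2sq : (4:ℤ) ≤ r ^ 2 := by nlinarith [hr2]
  have hr21 : (0:ℤ) ≤ r ^ 2 - 1 := by linarith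
  -- s > r
  have hs4 : r ^ 4 < s ^ 4 := by
    have := mul_lt_mul_of_pos_left hbc (pow_pos haz 4)
    linarith
  have hrs : r < s := lt_of_pow_lt_pow_left₀ 4 hs.le hs4
  -- key quartic identity
  have hU4 : U ^ 4 = (r ^ 4 - 1) * (s ^ 4 - 1) + a ^ 8 := by
    rw [hU_def]
    linear_combination a ^ 4 * c * h1 + (r ^ 4 - 1) * h2 - a ^ 8 * h3
  -- main identity
  have hzD : z * (X * Y) = r ^ 4 + s ^ 4 - 1 - a ^ 8 := by
    rw [hz, hX_def, hY_def]
    linear_combination (-1 : ℤ) * hU4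
  -- quadratic bound on U
  have hu2 : s ^ 2 * (r ^ 2 - 1) ≤ U ^ 2 :=
    le_of_pow_le_pow_left₀ two_ne_zero (sq_nonneg U) (aux_u2 r s U (a ^ 8) hr2 hs4 ha8 hU4)
  have hur : s * (r ^ 2 - 1) ≤ U * r := by
    have h' : (s * (r ^ 2 - 1)) ^ 2 ≤ (U * r) ^ 2 := by
      calc (s * (r ^ 2 - 1)) ^ 2 = (s ^ 2 * (r ^ 2 - 1)) * (r ^ 2 - 1) := by ring
        _ ≤ (s ^ 2 * (r ^ 2 - 1)) * r ^ 2 :=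
            mul_le_mul_of_nonneg_left (by linarith) (mul_nonneg (sq_nonneg s) hr21)
        _ ≤ U ^ 2 * r ^ 2 := mul_le_mul_of_nonneg_right hu2 (sq_nonneg r)
        _ = (U * r) ^ 2 := by ring
    exact le_of_pow_le_pow_left₀ two_ne_zero (by positivity) h'
  have hrX : s * (2 * r ^ 2 - 1) ≤ r * X := by rw [hX_def]; linarith [hur]
  have hYb : s ^ 2 * (2 * r ^ 2 - 1) ≤ Y := by rw [hY_def]; linarith [hu2]
  have hprod : (s * (2 * r ^ 2 - 1)) * (s ^ 2 * (2 * r ^ 2 - 1)) ≤ (r * X) * Y :=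
    mul_le_mul hrX hYb (mul_nonneg (sq_nonneg s) (by linarith)) (by positivity)
  have h5 : s ^ 3 * (2 * r ^ 2 - 1) ^ 2 ≤ r * (X * Y) := by
    calc s ^ 3 * (2 * r ^ 2 - 1) ^ 2
        = (s * (2 * r ^ 2 - 1)) * (s ^ 2 * (2 * r ^ 2 - 1)) := by ring
      _ ≤ (r * X) * Y := hprod
      _ = r * (X * Y) := by ring
  -- split on sign of z
  rcases le_or_gt z 0 with hz0 | hz1
  · have h30 : (0:ℤ) ≤ 3 * r ^ 3 := by positivity
    have : 3 * r ^ 3 * z ≤ 0 := mul_nonpos_of_nonneg_of_nonpos h30 hz0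
    linarith
  · have hz1 : 1 ≤ z := hz1
    have hXY : 0 < X * Y := mul_pos hXpos hYpos
    have hDXY : X * Y ≤ r ^ 4 + s ^ 4 - 1 - a ^ 8 := by
      calc X * Y = 1 * (X * Y) := by ring
        _ ≤ z * (X * Y) := mul_le_mul_of_nonneg_right hz1 hXY.le
        _ = r ^ 4 + s ^ 4 - 1 - a ^ 8 := hzD
    -- s ≥ 2 r²
    have h5b : r * (X * Y) ≤ r * (r ^ 4 + s ^ 4) := by
      calc r * (X * Y) ≤ r * (r ^ 4 + s ^ 4 - 1 - a ^ 8) := mul_le_mul_of_nonneg_left hDXY hr.le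
        _ ≤ r * (r ^ 4 + s ^ 4) := mul_le_mul_of_nonneg_left (by linarith) hr.le
    have h6 : 4 * r ^ 4 - 4 * r ^ 2 + 1 ≤ 2 * r * s := by
      have hrs4 : r ^ 5 ≤ r * s ^ 4 := by
        have := mul_le_mul_of_nonneg_left hs4.le hr.le
        linarith
      have hkey : (4 * r ^ 4 - 4 * r ^ 2 + 1) * s ^ 3 ≤ (2 * r * s) * s ^ 3 := by
        linarith [h5, h5b, hrs4]
      exact le_of_mul_le_mul_right hkey (pow_pos hs 3)
    have hs2r2 : 2 * r ^ 2 ≤ s := aux_sge r s hr2 h6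
    -- final inequality
    have hs416 : (2 * r ^ 2) ^ 4 ≤ s ^ 4 := pow_le_pow_left₀ (by positivity) hs2r2 4
    have hfin : 3 * r ^ 4 * (r ^ 4 + s ^ 4 - 1 - a ^ 8) < s ^ 4 * (2 * r ^ 2 - 1) ^ 2 :=
      aux_fin r s (a ^ 8) hr2 ha8 hs416
    have hsrXY : s ^ 4 * (2 * r ^ 2 - 1) ^ 2 ≤ s * (r * (X * Y)) := by
      calc s ^ 4 * (2 * r ^ 2 - 1) ^ 2 = s * (s ^ 3 * (2 * r ^ 2 - 1) ^ 2) := by ring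
        _ ≤ s * (r * (X * Y)) := mul_le_mul_of_nonneg_left h5 hs.le
    have hc : (0:ℤ) < r * (X * Y) := by positivity
    have hmain : (3 * r ^ 3 * z) * (r * (X * Y)) < s * (r * (X * Y)) := by
      have e : (3 * r ^ 3 * z) * (r * (X * Y)) = 3 * r ^ 4 * (z * (X * Y)) := by ring
      rw [e, hzD]
      exact lt_of_lt_of_le hfin hsrXY
    exact lt_of_mul_lt_mul_right hmain hc.le
end

section
/- Let 1 < a < b < c be integers with a^4 < b < c such that a^4·b + 1 = r^4, a^4·c + 1 = s^4, and b·c + 1 = t^4 for positive integers r, s, t, and set z := r·s − a^2·t (a positive integer). Then z > r/2, i.e. 2z > r. -/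
set_option maxHeartbeats 1000000 in
/-- For a 4-th power Diophantine triple `{a⁴, b, c}` with `z := rs - a²t`,
one has `z > r/2`, i.e. `2z > r`. -/
theorem two_z_gt_r
    (a b c r s t z : ℤ)
    (ha : 1 < a) (hab : a < b) (hbc : b < c) (hakb : a ^ 4 < b)
    (hr : 0 < r) (hs : 0 < s) (ht : 0 < t)
    (h1 : a ^ 4 * b + 1 = r ^ 4) (h2 : a ^ 4 * c + 1 = s ^ 4)
    (h3 : b * c + 1 = t ^ 4) (hz : z = r * s - a ^ 2 * t) :
    2 * z > r := by
  have ha2 : (2:ℤ) ≤ a := by linarith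
  have ha4 : (16:ℤ) ≤ a ^ 4 := by
    have := pow_le_pow_left₀ (show (0:ℤ) ≤ 2 by norm_num) ha2 4
    norm_num at this; linarith
  have ha40 : (0:ℤ) < a ^ 4 := by positivity
  have h1' : a ^ 4 * b = r ^ 4 - 1 := by linarith
  have h2' : a ^ 4 * c = s ^ 4 - 1 := by linarith
  have hb17 : a ^ 4 + 1 ≤ b := by linarith
  have hra : a ^ 8 + a ^ 4 + 1 ≤ r ^ 4 := by
    have h := mul_le_mul_of_nonneg_left hb17 ha40.le
    ring_nf at h ⊢
    linarith
  have hr4 : (273:ℤ) ≤ r ^ 4 := by nlinarith [sq_nonneg (a ^ 4 - 16)]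
  have hr5 : (5:ℤ) ≤ r := by
    by_contra hcon
    push_neg at hcon
    have h4 : r ≤ 4 := by linarith
    have hr2 : r ^ 2 ≤ 16 := by nlinarith
    nlinarith [sq_nonneg (r ^ 2)]
  have e2 : a ^ 8 * t ^ 4 = (r ^ 4 - 1) * (s ^ 4 - 1) + a ^ 8 := by
    linear_combination (-(a ^ 8)) * h3 + (a ^ 4 * c) * h1' + (r ^ 4 - 1) * h2'
  have hz4 : (a ^ 2 * t) ^ 4 < (r * s) ^ 4 := by
    have hs4 : (0:ℤ) < s ^ 4 := pow_pos hs 4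
    have expand : (r * s) ^ 4 - (a ^ 2 * t) ^ 4 = r ^ 4 + s ^ 4 - 1 - a ^ 8 := by
      linear_combination -e2
    linarith
  have hrs_t : a ^ 2 * t < r * s := lt_of_pow_lt_pow_left₀ 4 (by positivity) hz4
  have hz1 : (1:ℤ) ≤ z := by
    have := Int.add_one_le_iff.2 hrs_t
    linarith
  have hs4r : r ^ 4 < s ^ 4 := by
    have h := mul_lt_mul_of_pos_left hbc ha40
    ring_nf at h ⊢
    linarith
  have hrs : r < s := lt_of_pow_lt_pow_left₀ 4 hs.le hs4r
  have hrs1 : r + 1 ≤ s := Int.add_one_le_iff.2 hrs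
  have hat : a ^ 2 * t = r * s - z := by linarith
  have key : (r * s - z) ^ 4 = (r ^ 4 - 1) * (s ^ 4 - 1) + a ^ 8 := by
    rw [← hat]; linear_combination e2
  have star : 4 * z * r ^ 3 * s ^ 3 - 6 * z ^ 2 * r ^ 2 * s ^ 2 + 4 * z ^ 3 * r * s - z ^ 4
      = r ^ 4 + s ^ 4 - 1 - a ^ 8 := by
    linear_combination -key
  by_contra hcon
  push_neg at hcon
  have h2z : 2 * z ≤ r := hcon
  have hz40 : (0:ℤ) ≤ z ^ 4 := by positivity
  rcases le_or_gt (4 * z * r ^ 3) s with hA | hB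
  · -- s ≥ 4zr³ : LHS of star too small
    have hs3 : (0:ℤ) < s ^ 3 := pow_pos hs 3
    have e1 : 4 * z * r ^ 3 * s ^ 3 ≤ s ^ 4 := by
      have h := mul_nonneg hs3.le (sub_nonneg.2 hA)
      ring_nf at h ⊢
      linarith
    have e2' : 4 * z ^ 3 * r * s ≤ 2 * z ^ 2 * r ^ 2 * s := by
      have h := mul_le_mul_of_nonneg_left h2z
        (mul_nonneg (mul_nonneg (sq_nonneg z) hr.le) hs.le)
      ring_nf at h ⊢
      linarith
    have hss : (0:ℤ) ≤ s * (s - 1) := mul_nonneg hs.le (by linarith)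
    have e3 : 2 * z ^ 2 * r ^ 2 * s ≤ 2 * z ^ 2 * r ^ 2 * s ^ 2 := by
      have h := mul_nonneg (mul_nonneg (sq_nonneg z) (sq_nonneg r)) hss
      ring_nf at h ⊢
      linarith
    have e4 : (0:ℤ) < 4 * z ^ 2 * r ^ 2 * s ^ 2 := by positivity
    linarith [star, e1, e2', e3, e4, hra]
  · -- s ≤ 4zr³ − 1 : LHS of star too big
    have hk : s ≤ 4 * z * r ^ 3 - 1 := by
      have := Int.add_one_le_iff.2 hB; linarith
    have hf0 : (0:ℤ) ≤ (s - 1) * (4 * z * r ^ 3 - 1 - s) :=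
      mul_nonneg (by linarith) (by linarith)
    have hf : 4 * z * r ^ 3 - 1 ≤ s * (4 * z * r ^ 3 - s) := by
      ring_nf at hf0 ⊢
      linarith
    have h3z : 6 * z ^ 2 * r ^ 2 ≤ 3 * z * r ^ 3 := by
      have h := mul_le_mul_of_nonneg_left h2z (show (0:ℤ) ≤ 3 * z * r ^ 2 by positivity)
      ring_nf at h ⊢
      linarith
    have hsk : z * r ^ 3 - 1 ≤ s * (4 * z * r ^ 3 - s) - 6 * z ^ 2 * r ^ 2 := by linarith
    have hr3 : (125:ℤ) ≤ r ^ 3 := by nlinarith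
    have hzr31 : (0:ℤ) ≤ z * r ^ 3 - 1 := by nlinarith
    have hmul : s ^ 2 * (z * r ^ 3 - 1) ≤ s ^ 2 * (s * (4 * z * r ^ 3 - s) - 6 * z ^ 2 * r ^ 2) :=
      mul_le_mul_of_nonneg_left hsk (sq_nonneg s)
    have hr2s2 : r ^ 2 ≤ s ^ 2 := by nlinarith
    have hmul2 : r ^ 2 * (z * r ^ 3 - 1) ≤ s ^ 2 * (z * r ^ 3 - 1) :=
      mul_le_mul_of_nonneg_right hr2s2 hzr31
    have hz16 : 16 * z ^ 4 ≤ r ^ 4 := by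
      have h := pow_le_pow_left₀ (show (0:ℤ) ≤ 2 * z by linarith) h2z 4
      ring_nf at h ⊢
      linarith
    have h4z3 : (0:ℤ) ≤ 4 * z ^ 3 * r * s := by positivity
    have hzr5 : r ^ 5 ≤ z * r ^ 5 := by
      have h := mul_le_mul_of_nonneg_right hz1 (pow_pos hr 5).le
      linarith
    have ha8 : (0:ℤ) ≤ a ^ 8 := by positivity
    have hr45 : 5 * r ^ 4 ≤ r ^ 5 := by
      have h := mul_le_mul_of_nonneg_right hr5 (pow_pos hr 4).le
      ring_nf at h ⊢
      linarith
    have hr2' : (25:ℤ) ≤ r ^ 2 := by nlinarith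
    have hr24 : 25 * r ^ 2 ≤ r ^ 4 := by
      have h := mul_le_mul_of_nonneg_right hr2' (sq_nonneg r)
      ring_nf at h ⊢
      linarith
    have hmulx : s ^ 2 * (z * r ^ 3 - 1) = z * r ^ 3 * s ^ 2 - s ^ 2 := by ring
    have hmuly : s ^ 2 * (s * (4 * z * r ^ 3 - s) - 6 * z ^ 2 * r ^ 2)
        = 4 * z * r ^ 3 * s ^ 3 - s ^ 4 - 6 * z ^ 2 * r ^ 2 * s ^ 2 := by ring
    have hmulz : r ^ 2 * (z * r ^ 3 - 1) = z * r ^ 5 - r ^ 2 := by ring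
    linarith [star, hmul, hmul2, hz16, h4z3, hzr5, ha8, hr45, hr24, hmulx, hmuly, hmulz]
end

section
/- Let 1 < a < b < c be integers with a^4 < b < c such that a^4·b + 1 = r^4, a^4·c + 1 = s^4, and b·c + 1 = t^4 for positive integers r, s, t. Then a^4·c > 16·(a^4·b)^4. -/
set_option maxHeartbeats 4000000 in
/-- For a 4-th power Diophantine triple `{a⁴, b, c}`, one has `a⁴c > 16(a⁴b)⁴`. -/
theorem a4c_gt_sixteen_a4b_fourth
    (a b c r s t : ℤ)
    (ha : 1 < a) (hab : a < b) (hbc : b < c) (hakb : a ^ 4 < b)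
    (hr : 0 < r) (hs : 0 < s) (ht : 0 < t)
    (h1 : a ^ 4 * b + 1 = r ^ 4) (h2 : a ^ 4 * c + 1 = s ^ 4)
    (h3 : b * c + 1 = t ^ 4) :
    a ^ 4 * c > 16 * (a ^ 4 * b) ^ 4 := by
  have ha0 : (0:ℤ) < a := by linarith
  have ha2 : (2:ℤ) ≤ a := ha
  have ha4 : (16:ℤ) ≤ a ^ 4 := by
    have h24 : (2:ℤ) ^ 4 ≤ a ^ 4 := pow_le_pow_left₀ (by norm_num) ha2 4
    norm_num at h24; linarith
  have ha8 : (256:ℤ) ≤ a ^ 8 := by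
    have h28 : (2:ℤ) ^ 8 ≤ a ^ 8 := pow_le_pow_left₀ (by norm_num) ha2 8
    norm_num at h28; linarith
  have haa : (4:ℤ) ≤ a ^ 2 := by
    have h22 : (2:ℤ) ^ 2 ≤ a ^ 2 := pow_le_pow_left₀ (by norm_num) ha2 2
    norm_num at h22; linarith
  have hb : a ^ 4 + 1 ≤ b := hakb
  have hc : b + 1 ≤ c := hbc
  have hbpos : (0:ℤ) < b := by linarith
  have hcpos : (0:ℤ) < c := by linarith
  have hr4 : r ^ 4 = a ^ 4 * b + 1 := h1.symm
  have hs4 : s ^ 4 = a ^ 4 * c + 1 := h2.symm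
  have ht4 : t ^ 4 = b * c + 1 := h3.symm
  have ha4pos : (0:ℤ) < a ^ 4 := by positivity
  -- a^4 * (a^4+1) ≤ a^4 * b , etc.
  have hab4 : a ^ 4 * (a ^ 4 + 1) ≤ a ^ 4 * b :=
    mul_le_mul_of_nonneg_left hb ha4pos.le
  have hbc4 : a ^ 4 * b < a ^ 4 * c := by
    have := mul_lt_mul_of_pos_left hbc ha4pos
    linarith
  have hr4low : a ^ 8 + a ^ 4 + 1 ≤ r ^ 4 := by
    rw [hr4]; linarith [hab4]
  -- r ≥ a² + 1 ≥ 5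
  have hra : a ^ 2 + 1 ≤ r := by
    by_contra hcon
    push_neg at hcon
    have h' : r ≤ a ^ 2 := by linarith
    have h'' := pow_le_pow_left₀ hr.le h' 4
    have e : (a ^ 2) ^ 4 = a ^ 8 := by ring
    rw [e] at h''
    linarith
  have hr5 : (5:ℤ) ≤ r := by linarith
  -- s ≥ r + 1
  have hsr : r + 1 ≤ s := by
    by_contra hcon
    push_neg at hcon
    have h' : s ≤ r := by linarith
    have h'' := pow_le_pow_left₀ hs.le h' 4
    rw [hr4, hs4] at h''
    linarith
  have hs6 : (6:ℤ) ≤ s := by linarith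
  -- key identity
  have key : (r * s) ^ 4 - (a ^ 2 * t) ^ 4 = r ^ 4 + s ^ 4 - 1 - a ^ 8 := by
    have e1 : (r * s) ^ 4 = r ^ 4 * s ^ 4 := by ring
    have e2 : (a ^ 2 * t) ^ 4 = a ^ 8 * t ^ 4 := by ring
    rw [e1, e2, hr4, hs4, ht4]; ring
  have keyD : (r * s) ^ 4 - (a ^ 2 * t) ^ 4 = a ^ 4 * b + a ^ 4 * c + 1 - a ^ 8 := by
    rw [key, hr4, hs4]; ring
  -- rs > a²t
  have hca2 : a ^ 4 + 2 ≤ c := by linarith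
  have hw : a ^ 2 * t < r * s := by
    have hpos : (0:ℤ) < (r * s) ^ 4 - (a ^ 2 * t) ^ 4 := by
      rw [keyD]
      have : a ^ 4 * (a ^ 4 + 2) ≤ a ^ 4 * c := mul_le_mul_of_nonneg_left hca2 ha4pos.le
      linarith [this, mul_pos ha4pos hbpos]
    by_contra hcon
    push_neg at hcon
    have h0 : (0:ℤ) ≤ r * s := by positivity
    have := pow_le_pow_left₀ h0 hcon 4
    linarith
  set w : ℤ := a ^ 2 * t with hwdef
  set d : ℤ := r * s - w with hddef
  have hdpos : (0:ℤ) < d := by rw [hddef]; linarith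
  have hd1 : (1:ℤ) ≤ d := hdpos
  have hwpos : (0:ℤ) < w := by
    rw [hwdef]
    exact mul_pos (by positivity) ht
  have hw1 : (1:ℤ) ≤ w := hwpos
  have hrs : r * s = w + d := by rw [hddef]; ring
  -- D as a difference of fourth powers
  have hD2 : (w + d) ^ 4 - w ^ 4 = a ^ 4 * b + a ^ 4 * c + 1 - a ^ 8 := by
    rw [← hrs]; exact keyD
  -- Step 3 : pre-crude bound c > 16 a^8 b^3
  have hexp : (w + d) ^ 4 - w ^ 4 = 4 * d * w ^ 3 + 6 * d ^ 2 * w ^ 2 + 4 * d ^ 3 * w + d ^ 4 := by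
    ring
  have hw3 : (0:ℤ) < w ^ 3 := by positivity
  have hnn1 : 0 ≤ (d - 1) * w ^ 3 := mul_nonneg (by linarith) hw3.le
  have hnn2 : 0 ≤ d ^ 2 * w ^ 2 := by positivity
  have hnn3 : 0 ≤ d ^ 3 * w := mul_nonneg (by positivity) hwpos.le
  have hnn4 : 0 ≤ d ^ 4 := by positivity
  have hst3 : 4 * w ^ 3 ≤ (w + d) ^ 4 - w ^ 4 := by
    rw [hexp]; linarith [hnn1, hnn2, hnn3, hnn4]
  have hDlt : a ^ 4 * b + a ^ 4 * c + 1 - a ^ 8 < 2 * a ^ 4 * c := by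
    linarith [hbc4, ha8]
  have hct : 2 * (a ^ 2 * t ^ 3) < c := by
    have h4 : (4:ℤ) * w ^ 3 = 2 * a ^ 4 * (2 * (a ^ 2 * t ^ 3)) := by
      rw [hwdef]; ring
    have h5 : 2 * a ^ 4 * (2 * (a ^ 2 * t ^ 3)) < 2 * a ^ 4 * c := by
      rw [← h4]
      calc (4:ℤ) * w ^ 3 ≤ (w + d) ^ 4 - w ^ 4 := hst3
        _ = a ^ 4 * b + a ^ 4 * c + 1 - a ^ 8 := hD2
        _ < 2 * a ^ 4 * c := hDlt
    have hpos : (0:ℤ) < 2 * a ^ 4 := by positivity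
    exact lt_of_mul_lt_mul_left h5 hpos.le
  have hc16 : 16 * a ^ 8 * b ^ 3 < c := by
    have h0 : (0:ℤ) ≤ 2 * (a ^ 2 * t ^ 3) := by
      have : (0:ℤ) ≤ t ^ 3 := by positivity
      positivity
    have h4 : (2 * (a ^ 2 * t ^ 3)) ^ 4 < c ^ 4 := pow_lt_pow_left₀ hct h0 (by norm_num)
    have h5 : (2 * (a ^ 2 * t ^ 3)) ^ 4 = 16 * a ^ 8 * (t ^ 4) ^ 3 := by ring
    rw [h5, ht4] at h4
    have h6 : (b * c) ^ 3 ≤ (b * c + 1) ^ 3 :=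
      pow_le_pow_left₀ (by positivity) (by linarith) 3
    have h6' : 16 * a ^ 8 * (b * c) ^ 3 ≤ 16 * a ^ 8 * (b * c + 1) ^ 3 :=
      mul_le_mul_of_nonneg_left h6 (by positivity)
    have h7 : 16 * a ^ 8 * b ^ 3 * c ^ 3 < c * c ^ 3 := by linarith [h6', h4]
    have hc3 : (0:ℤ) ≤ c ^ 3 := by positivity
    exact lt_of_mul_lt_mul_right h7 hc3
  -- Step 4 : 2d ≥ r + 1  (the sandwich exclusion)
  have h2d : r + 1 ≤ 2 * d := by
    by_contra hcon
    push_neg at hcon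
    have hdr : 2 * d ≤ r := by linarith
    have EQ : 4 * d * r ^ 3 * s ^ 3 - 6 * d ^ 2 * r ^ 2 * s ^ 2 + 4 * d ^ 3 * (r * s) - d ^ 4
        = r ^ 4 + s ^ 4 - 1 - a ^ 8 := by
      have e : r * s - d = a ^ 2 * t := by rw [hddef, hwdef]; ring
      have e2 : (r * s) ^ 4 - (r * s - d) ^ 4
          = 4 * d * r ^ 3 * s ^ 3 - 6 * d ^ 2 * r ^ 2 * s ^ 2 + 4 * d ^ 3 * (r * s) - d ^ 4 := by
        ring
      rw [← e2, e]
      exact key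
    have hrpow3 : (0:ℤ) < r ^ 3 := by positivity
    have hrpow4 : (0:ℤ) < r ^ 4 := by positivity
    have hrpow5 : (0:ℤ) < r ^ 5 := by positivity
    have ha8nn : (0:ℤ) ≤ a ^ 8 := by positivity
    have hd4one : (1:ℤ) ≤ d ^ 4 := by
      have h1d := pow_le_pow_left₀ (by norm_num : (0:ℤ) ≤ 1) hd1 4
      simpa using h1d
    have R5 : 16 * d ^ 4 ≤ r ^ 4 := by
      have h2d4 := pow_le_pow_left₀ (by linarith : (0:ℤ) ≤ 2 * d) hdr 4
      linarith [h2d4]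
    have R6 : (0:ℤ) ≤ 4 * d ^ 3 * (r * s) := by positivity
    rcases le_or_gt (4 * d * r ^ 3) s with hreg | hreg
    · -- region (i): s ≥ 4dr³, the quantity is too small
      have P1 : 0 ≤ s ^ 3 * (s - 4 * d * r ^ 3) :=
        mul_nonneg (by positivity) (by linarith)
      have hrrs : r ≤ r * s := le_mul_of_one_le_right hr.le (by linarith)
      have hrs0 : (0:ℤ) < r * s := mul_pos hr hs
      have hd2pos : (0:ℤ) < d ^ 2 := pow_pos hdpos 2
      have P2 : 0 < 2 * d ^ 2 * (r * s) * (3 * (r * s) - 2 * d) := by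
        apply mul_pos (mul_pos (by linarith) hrs0)
        linarith [hrrs]
      linarith [EQ, P1, P2, hd4one, hr4low, ha4]
    · rcases le_or_gt s (3 * d * r ^ 3) with hreg2 | hreg2
      · -- region (ii): r+1 ≤ s ≤ 3dr³
        have R1 : 0 ≤ s ^ 3 * (3 * d * r ^ 3 - s) :=
          mul_nonneg (by positivity) (by linarith)
        have R2 : 0 ≤ 3 * d * r ^ 2 * (r - 2 * d) * s ^ 2 := by
          apply mul_nonneg _ (by positivity)
          apply mul_nonneg (by positivity) (by linarith)
        have R3 : 0 ≤ d * r ^ 3 * s ^ 2 * (s - 6) := by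
          apply mul_nonneg _ (by linarith)
          positivity
        have R4 : 0 ≤ 3 * d * r ^ 3 * ((s - (r + 1)) * (s + (r + 1))) := by
          apply mul_nonneg (by positivity)
          exact mul_nonneg (by linarith) (by linarith)
        have R9 : 0 ≤ 3 * r ^ 3 * (r + 1) ^ 2 * (d - 1) :=
          mul_nonneg (by positivity) (by linarith)
        linarith [EQ, R1, R2, R3, R4, R9, R5, R6, hrpow3, hrpow4, hrpow5, ha8nn]
      · -- region (iii): 3dr³ < s < 4dr³
        have hdr3 : (0:ℤ) < d * r ^ 3 := mul_pos hdpos hrpow3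
        have T1 : 0 ≤ s ^ 3 * (4 * d * r ^ 3 - s - 1) :=
          mul_nonneg (by positivity) (by linarith)
        have T2 : 0 ≤ 3 * d * r ^ 2 * (r - 2 * d) * s ^ 2 := by
          apply mul_nonneg _ (by positivity)
          apply mul_nonneg (by positivity) (by linarith)
        have T3 : 0 ≤ s ^ 2 * (s - 3 * d * r ^ 3 - 1) :=
          mul_nonneg (by positivity) (by linarith)
        have T4 : 0 ≤ (s - (3 * d * r ^ 3 + 1)) * (s + (3 * d * r ^ 3 + 1)) :=
          mul_nonneg (by linarith) (by linarith)
        have U1 : 4 * d ^ 2 ≤ r ^ 2 := by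
          have h2d2 := pow_le_pow_left₀ (by linarith : (0:ℤ) ≤ 2 * d) hdr 2
          linarith [h2d2]
        have U2 : 4 * d ^ 4 ≤ d ^ 2 * r ^ 2 := by
          have hmm := mul_le_mul_of_nonneg_left U1 (by positivity : (0:ℤ) ≤ d ^ 2)
          linarith [hmm]
        have hr2one : (1:ℤ) ≤ r ^ 2 := by
          have hh := pow_le_pow_left₀ (by norm_num : (0:ℤ) ≤ 1) (by linarith : (1:ℤ) ≤ r) 2
          simpa using hh
        have hr4one : (1:ℤ) ≤ r ^ 4 := by
          have hh := pow_le_pow_left₀ (by norm_num : (0:ℤ) ≤ 1) (by linarith : (1:ℤ) ≤ r) 4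
          simpa using hh
        have hd2one : (1:ℤ) ≤ d ^ 2 := by
          have hh := pow_le_pow_left₀ (by norm_num : (0:ℤ) ≤ 1) hd1 2
          simpa using hh
        have U3 : 0 ≤ d ^ 2 * r ^ 2 * (r ^ 4 - 1) :=
          mul_nonneg (by positivity) (by linarith)
        have U4 : 0 ≤ r ^ 4 * (r ^ 2 - 1) :=
          mul_nonneg (by positivity) (by linarith)
        have U5 : 0 ≤ r ^ 6 * (d ^ 2 - 1) :=
          mul_nonneg (by positivity) (by linarith)
        linarith [EQ, T1, T2, T3, T4, U2, U3, U4, U5, R6, ha8nn, hd4one]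
  -- Step 5 : conclusion
  have G1 : 2 * (r + 1) * w ^ 3 ≤ (w + d) ^ 4 - w ^ 4 := by
    have e : 4 * d * w ^ 3 ≤ (w + d) ^ 4 - w ^ 4 := by
      rw [hexp]; linarith [hnn2, hnn3, hnn4]
    have e2 : 0 ≤ (4 * d - 2 * (r + 1)) * w ^ 3 :=
      mul_nonneg (by linarith) hw3.le
    linarith [e, e2]
  have G2 : 2 * (r + 1) * a ^ 2 * t ^ 3 < b + c := by
    have e1 : 2 * (r + 1) * w ^ 3 < a ^ 4 * (b + c) := by
      have h' : (w + d) ^ 4 - w ^ 4 < a ^ 4 * (b + c) := by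
        rw [hD2]; linarith [ha8]
      linarith
    have e2 : 2 * (r + 1) * w ^ 3 = a ^ 4 * (2 * (r + 1) * a ^ 2 * t ^ 3) := by
      rw [hwdef]; ring
    rw [e2] at e1
    exact lt_of_mul_lt_mul_left e1 ha4pos.le
  have G3 : (0:ℤ) ≤ 2 * (r + 1) * a ^ 2 * t ^ 3 := by
    have h1' : (0:ℤ) ≤ r + 1 := by linarith
    have h2' : (0:ℤ) ≤ t ^ 3 := by positivity
    positivity
  have G4 : (2 * (r + 1) * a ^ 2 * t ^ 3) ^ 4 < (b + c) ^ 4 :=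
    pow_lt_pow_left₀ G2 G3 (by norm_num)
  have G5 : (2 * (r + 1) * a ^ 2 * t ^ 3) ^ 4 = 16 * (r + 1) ^ 4 * a ^ 8 * (t ^ 4) ^ 3 := by
    ring
  rw [G5, ht4] at G4
  have hr1nn : (0:ℤ) ≤ (r + 1) ^ 4 := by positivity
  have G6 : 16 * (r + 1) ^ 4 * a ^ 8 * (b * c) ^ 3 ≤ 16 * (r + 1) ^ 4 * a ^ 8 * (b * c + 1) ^ 3 := by
    have h6 : (b * c) ^ 3 ≤ (b * c + 1) ^ 3 :=
      pow_le_pow_left₀ (by positivity) (by linarith) 3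
    have hfac : (0:ℤ) ≤ 16 * (r + 1) ^ 4 * a ^ 8 := by positivity
    exact mul_le_mul_of_nonneg_left h6 hfac
  have G7 : a ^ 4 * b + 4 * r ^ 3 ≤ (r + 1) ^ 4 := by
    have e : (r + 1) ^ 4 = r ^ 4 + 4 * r ^ 3 + 6 * r ^ 2 + 4 * r + 1 := by ring
    rw [e, hr4]; linarith [sq_nonneg r, hr.le]
  have G8 : 16 * (a ^ 4 * b + 4 * r ^ 3) * a ^ 8 * b ^ 3 * c ^ 3 < (b + c) ^ 4 := by
    have hfac : (0:ℤ) ≤ 16 * a ^ 8 * b ^ 3 * c ^ 3 := by positivity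
    have hmono := mul_le_mul_of_nonneg_right G7 hfac
    linarith [hmono, G6, G4]
  -- (b+c)^4 ≤ c^4 + 5 b c^3
  have h11 : 11 * b ≤ c := by
    have V0 : 0 ≤ b * (b - 1) * (b + 1) := by
      apply mul_nonneg _ (by linarith)
      exact mul_nonneg hbpos.le (by linarith)
    have W : 256 * b ^ 3 ≤ a ^ 8 * b ^ 3 :=
      mul_le_mul_of_nonneg_right ha8 (by positivity)
    linarith [hc16, W, V0]
  have G9 : (b + c) ^ 4 ≤ c ^ 4 + 5 * b * c ^ 3 := by
    have V1 : 0 ≤ b * c ^ 2 * (c - 11 * b) :=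
      mul_nonneg (by positivity) (by linarith)
    have V2 : 0 ≤ 4 * b ^ 2 * c * (c - b) := by
      apply mul_nonneg _ (by linarith)
      positivity
    have V3 : 0 ≤ b ^ 2 * ((c - b) * (c + b)) := by
      apply mul_nonneg (by positivity)
      exact mul_nonneg (by linarith) (by linarith)
    linarith [V1, V2, V3]
  have G10 : 16 * a ^ 12 * b ^ 4 + 64 * r ^ 3 * a ^ 8 * b ^ 3 < c + 5 * b := by
    have e1 : (16 * a ^ 12 * b ^ 4 + 64 * r ^ 3 * a ^ 8 * b ^ 3) * c ^ 3 < (c + 5 * b) * c ^ 3 := by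
      have e2 : 16 * (a ^ 4 * b + 4 * r ^ 3) * a ^ 8 * b ^ 3 * c ^ 3
          = (16 * a ^ 12 * b ^ 4 + 64 * r ^ 3 * a ^ 8 * b ^ 3) * c ^ 3 := by ring
      linarith [G8, G9, e2]
    have hc3 : (0:ℤ) ≤ c ^ 3 := by positivity
    exact lt_of_mul_lt_mul_right e1 hc3
  have G11 : 5 * b < 64 * r ^ 3 * a ^ 8 * b ^ 3 := by
    have X1 : (125:ℤ) ≤ r ^ 3 := by
      have := pow_le_pow_left₀ (by norm_num : (0:ℤ) ≤ 5) hr5 3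
      norm_num at this; linarith
    have hb3 : (0:ℤ) ≤ a ^ 8 * b ^ 3 := by positivity
    have Y1 : 125 * (a ^ 8 * b ^ 3) ≤ r ^ 3 * (a ^ 8 * b ^ 3) :=
      mul_le_mul_of_nonneg_right X1 hb3
    have Y2 : 256 * b ^ 3 ≤ a ^ 8 * b ^ 3 :=
      mul_le_mul_of_nonneg_right ha8 (by positivity)
    have Y3 : 0 ≤ b * (b - 1) * (b + 1) := by
      apply mul_nonneg _ (by linarith)
      exact mul_nonneg hbpos.le (by linarith)
    linarith [Y1, Y2, Y3]
  have hfinal : 16 * a ^ 12 * b ^ 4 < c := by linarith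
  have hmul : a ^ 4 * (16 * a ^ 12 * b ^ 4) < a ^ 4 * c :=
    mul_lt_mul_of_pos_left hfinal ha4pos
  calc 16 * (a ^ 4 * b) ^ 4 = a ^ 4 * (16 * a ^ 12 * b ^ 4) := by ring
    _ < a ^ 4 * c := hmul
end

section
/- Let k ≥ 3 and 1 < a < b < c be integers with a^k < b < c such that a^k·b + 1 = r^k, a^k·c + 1 = s^k, and b·c + 1 = t^k for positive integers r, s, t. Then s^k·(r^k − 2) < a^{2k}·t^k; equivalently, (a^2·t)/s > (r^k − 2)^{1/k}, where the k-th root is the real positive one. -/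
/-- For a `k`-th power Diophantine triple `{a^k, b, c}`, one has
`s^k (r^k - 2) < a^{2k} t^k`; equivalently `a² t / s > (r^k - 2)^{1/k}`. -/
theorem sk_rk_sub_two_lt
    (k : ℕ) (a b c r s t : ℤ) (hk : 3 ≤ k)
    (ha : 1 < a) (hab : a < b) (hbc : b < c) (hakb : a ^ k < b)
    (hr : 0 < r) (hs : 0 < s) (ht : 0 < t)
    (h1 : a ^ k * b + 1 = r ^ k) (h2 : a ^ k * c + 1 = s ^ k)
    (h3 : b * c + 1 = t ^ k) :
    s ^ k * (r ^ k - 2) < a ^ (2 * k) * t ^ k ∧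
      (a : ℝ) ^ 2 * t / s > ((r : ℝ) ^ k - 2) ^ ((1 : ℝ) / k) := by
  have ha0 : (0:ℤ) < a := by linarith
  have hak : (1:ℤ) < a ^ k := one_lt_pow₀ ha (by omega)
  have hb1 : 1 < b := lt_trans ha hab
  have key : s ^ k * (r ^ k - 2) < a ^ (2 * k) * t ^ k := by
    have h2k : a ^ (2 * k) = a ^ k * a ^ k := by rw [two_mul, pow_add]
    rw [← h1, ← h2, ← h3, h2k]
    nlinarith [mul_pos (lt_trans one_pos hak) (sub_pos.mpr hbc)]
  refine ⟨key, ?_⟩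
  -- real part
  have hrk2 : (0:ℤ) < r ^ k - 2 := by nlinarith
  have hsR : (0:ℝ) < (s:ℝ) := by exact_mod_cast hs
  have hY : (0:ℝ) < (a:ℝ) ^ 2 * t / s := by
    apply div_pos _ hsR
    have : (0:ℝ) < (a:ℝ) := by exact_mod_cast ha0
    have : (0:ℝ) < (t:ℝ) := by exact_mod_cast ht
    positivity
  have hX : (0:ℝ) < (r:ℝ) ^ k - 2 := by
    have : (0:ℝ) < ((r ^ k - 2 : ℤ) : ℝ) := by exact_mod_cast hrk2
    push_cast at this
    linarith
  have hXY : (r:ℝ) ^ k - 2 < ((a:ℝ) ^ 2 * t / s) ^ k := by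
    rw [div_pow, lt_div_iff₀ (by positivity)]
    have h' : ((s ^ k * (r ^ k - 2) : ℤ) : ℝ) < ((a ^ (2 * k) * t ^ k : ℤ) : ℝ) := by
      exact_mod_cast key
    push_cast at h'
    calc ((r:ℝ) ^ k - 2) * (s:ℝ) ^ k = (s:ℝ) ^ k * ((r:ℝ) ^ k - 2) := by ring
    _ < (a:ℝ) ^ (2 * k) * (t:ℝ) ^ k := h'
    _ = ((a:ℝ) ^ 2 * (t:ℝ)) ^ k := by rw [mul_pow, pow_mul]
  have hkR : ((k:ℝ)) ≠ 0 := by positivity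
  calc ((r:ℝ) ^ k - 2) ^ ((1:ℝ)/k)
      < (((a:ℝ) ^ 2 * t / s) ^ k) ^ ((1:ℝ)/k) := by
        apply Real.rpow_lt_rpow (le_of_lt hX) hXY
        positivity
    _ = (a:ℝ) ^ 2 * t / s := by
        rw [← Real.rpow_natCast ((a:ℝ) ^ 2 * t / s) k, ← Real.rpow_mul (le_of_lt hY),
          mul_one_div, div_self hkR, Real.rpow_one]
end
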